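/- arXiv:2512.13585 — 2 statements merged into one kernel-verified Lean document; each statement's English description precedes it below -/
import Mathlib

section
/- Let n ≥ 14 be an even integer such that 4n − 15 is a perfect square, and let k = (√(4n−15) − 1)/2. Then the variant caterpillar C_{n−3}(n/2 − 1, 2; n/2 + k − 2, 1) is transmission irregular if and only if none of the numbers 8k² + 17, 8k² + 8k + 9 and 8k² + 16k + 9 is a perfect square. -/
open SimpleGraph

variable {V : Type*}

/-- The transmission of a vertex `v`: the sum of distances from `v` to all vertices. -/
noncomputable def transmission (G : SimpleGraph V) [Fintype V] (v : V) : ℕ :=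
  ∑ u : V, G.dist v u

/-- The Wiener index: the sum of distances over all unordered pairs of vertices. -/
noncomputable def wienerIndex (G : SimpleGraph V) [Fintype V] : ℕ :=
  (∑ u : V, ∑ w : V, G.dist u w) / 2

/-- A graph on at least two vertices is transmission irregular if all of its vertices
have pairwise distinct transmissions. -/
def TransIrregular (G : SimpleGraph V) [Fintype V] : Prop :=
  2 ≤ Fintype.card V ∧ Function.Injective (transmission G)

/-- The degree of a vertex. -/
noncomputable def vertexDegree (G : SimpleGraph V) (v : V) : ℕ :=
  Nat.card (G.neighborSet v)

/-- A natural number is a perfect square. -/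
def IsPerfectSquare (m : ℕ) : Prop := ∃ t : ℕ, m = t * t

/-- The starlike tree `S(a, b, c)`: three pendent paths of lengths `a`, `b`, `c`
emanating from a common central vertex (vertex `0`).  The first branch consists of the
vertices `1, …, a`, the second of `a+1, …, a+b` and the third of `a+b+1, …, a+b+c`. -/
def starlike (a b c : ℕ) : SimpleGraph (Fin (a + b + c + 1)) :=
  SimpleGraph.fromRel (fun x y =>
    (y.val = x.val + 1 ∧ x.val ≠ a ∧ x.val ≠ a + b) ∨
    (x.val = 0 ∧ (y.val = a + 1 ∨ y.val = a + b + 1)))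

/-- The ordinary caterpillar `C_m(a, b)`: the path `v_1 v_2 ⋯ v_m` (vertices `0, …, m-1`)
together with one new leaf attached to `v_a` (the vertex `m`, attached to `a-1`) and one new
leaf attached to `v_b` (the vertex `m+1`, attached to `b-1`). -/
def caterpillar2 (m a b : ℕ) : SimpleGraph (Fin (m + 2)) :=
  SimpleGraph.fromRel (fun x y =>
    (y.val = x.val + 1 ∧ y.val < m) ∨
    (x.val = a - 1 ∧ y.val = m) ∨
    (x.val = b - 1 ∧ y.val = m + 1))

/-- The variant caterpillar `C_m(a, 2; b, 1)`: the path `v_1 v_2 ⋯ v_m`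
(vertices `0, …, m-1`) together with a pendent path of length two attached to `v_a`
(vertices `m` and `m+1`) and a pendent path of length one attached to `v_b`
(the vertex `m+2`). -/
def varCaterpillar (m a b : ℕ) : SimpleGraph (Fin (m + 3)) :=
  SimpleGraph.fromRel (fun x y =>
    (y.val = x.val + 1 ∧ y.val < m) ∨
    (x.val = a - 1 ∧ y.val = m) ∨
    (x.val = m ∧ y.val = m + 1) ∨
    (x.val = b - 1 ∧ y.val = m + 2))

/-- `T` is a transmission irregular tree of order `n` attaining the maximum Wiener
index among all transmission irregular trees of order `n`. -/
def MaxTITree (n : ℕ) (T : SimpleGraph (Fin n)) : Prop :=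
  T.IsTree ∧ TransIrregular T ∧
    ∀ T' : SimpleGraph (Fin n), T'.IsTree → TransIrregular T' →
      wienerIndex T' ≤ wienerIndex T

/-- The graph `X` is, up to isomorphism, the unique transmission irregular tree of
order `n` attaining the maximum Wiener index. -/
def UniqueMaxTITree (n : ℕ) {m : ℕ} (X : SimpleGraph (Fin m)) : Prop :=
  (∃ T : SimpleGraph (Fin n), MaxTITree n T ∧ Nonempty (T ≃g X)) ∧
    ∀ T : SimpleGraph (Fin n), MaxTITree n T → Nonempty (T ≃g X)


def vpos (c k v : ℕ) : ℤ := if v ≤ 2*c then v else if v ≤ 2*c+2 then c else c+k-1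
def vht (c v : ℕ) : ℕ := if v ≤ 2*c then 0 else if v = 2*c+1 then 1 else if v = 2*c+2 then 2 else 1
def DD (c k u v : ℕ) : ℕ :=
  if (2*c+1 ≤ u ∧ u ≤ 2*c+2 ∧ 2*c+1 ≤ v ∧ v ≤ 2*c+2) ∨ (u = 2*c+3 ∧ v = 2*c+3)
  then ((vht c u : ℤ) - vht c v).natAbs
  else ((vpos c k u - vpos c k v).natAbs + vht c u + vht c v)

def erel (c k u w : ℕ) : Prop :=
  (w = u+1 ∧ w < 2*c+1) ∨ (u = c ∧ w = 2*c+1) ∨ (u = 2*c+1 ∧ w = 2*c+2) ∨ (u = c+k-1 ∧ w = 2*c+3)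
  ∨ (u = w+1 ∧ u < 2*c+1) ∨ (w = c ∧ u = 2*c+1) ∨ (w = 2*c+1 ∧ u = 2*c+2) ∨ (w = c+k-1 ∧ u = 2*c+3)

variable {c k : ℕ}

lemma DD_symm (u v : ℕ) : DD c k u v = DD c k v u := by
  unfold DD vpos vht; split_ifs <;> omega

lemma DD_PP {u v : ℕ} (hu : u ≤ 2*c) (hv : v ≤ 2*c) : DD c k u v = ((u:ℤ) - v).natAbs := by
  unfold DD vpos vht; split_ifs <;> omega

lemma DD_PA {u : ℕ} (hu : u ≤ 2*c) : DD c k u (2*c+1) = ((u:ℤ) - c).natAbs + 1 := by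
  unfold DD vpos vht; split_ifs <;> omega

lemma DD_PB {u : ℕ} (hu : u ≤ 2*c) : DD c k u (2*c+2) = ((u:ℤ) - c).natAbs + 2 := by
  unfold DD vpos vht; split_ifs <;> omega

lemma DD_PC {u : ℕ} (hu : u ≤ 2*c) : DD c k u (2*c+3) = ((u:ℤ) - c - k + 1).natAbs + 1 := by
  unfold DD vpos vht; split_ifs <;> omega

lemma DD_AA : DD c k (2*c+1) (2*c+1) = 0 := by unfold DD vpos vht; split_ifs <;> omega
lemma DD_BB : DD c k (2*c+2) (2*c+2) = 0 := by unfold DD vpos vht; split_ifs <;> omega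
lemma DD_CC : DD c k (2*c+3) (2*c+3) = 0 := by unfold DD vpos vht; split_ifs <;> omega
lemma DD_AB : DD c k (2*c+1) (2*c+2) = 1 := by unfold DD vpos vht; split_ifs <;> omega

lemma DD_AC (hk : 1 ≤ k) (hkc : k ≤ c) : DD c k (2*c+1) (2*c+3) = k+1 := by
  unfold DD vpos vht; split_ifs <;> omega

lemma DD_BC (hk : 1 ≤ k) (hkc : k ≤ c) : DD c k (2*c+2) (2*c+3) = k+2 := by
  unfold DD vpos vht; split_ifs <;> omega

lemma DD_diag {v : ℕ} (hv : v < 2*c+4) : DD c k v v = 0 := by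
  unfold DD vpos vht; split_ifs <;> omega

lemma DD_lip (hk : 3 ≤ k) (hkc : k ≤ c) {u v w : ℕ} (hv : v < 2*c+4)
    (hrel : erel c k u w) : DD c k u v ≤ DD c k w v + 1 := by
  have hv4 : v ≤ 2*c ∨ v = 2*c+1 ∨ v = 2*c+2 ∨ v = 2*c+3 := by omega
  rcases hrel with ⟨h1,h2⟩|⟨h1,h2⟩|⟨h1,h2⟩|⟨h1,h2⟩|⟨h1,h2⟩|⟨h1,h2⟩|⟨h1,h2⟩|⟨h1,h2⟩ <;>
    rcases hv4 with hv4|hv4|hv4|hv4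
  · -- w = u+1, path / v:P
    rw [h1]; have g0 := DD_PP (c:=c) (k:=k) (u:=u) (v:=v) (by omega) (by omega); have g1 := DD_PP (c:=c) (k:=k) (u:=u+1) (v:=v) (by omega) (by omega); omega
  · -- w = u+1, path / v:A
    rw [h1, hv4]; have g0 := DD_PA (c:=c) (k:=k) (u:=u) (by omega); have g1 := DD_PA (c:=c) (k:=k) (u:=u+1) (by omega); omega
  · -- w = u+1, path / v:B
    rw [h1, hv4]; have g0 := DD_PB (c:=c) (k:=k) (u:=u) (by omega); have g1 := DD_PB (c:=c) (k:=k) (u:=u+1) (by omega); omega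
  · -- w = u+1, path / v:C
    rw [h1, hv4]; have g0 := DD_PC (c:=c) (k:=k) (u:=u) (by omega); have g1 := DD_PC (c:=c) (k:=k) (u:=u+1) (by omega); omega
  · -- u = c, w = 2c+1 / v:P
    rw [h1, h2]; have g0 := DD_PP (c:=c) (k:=k) (u:=c) (v:=v) (by omega) (by omega); have g1 := DD_symm (c:=c) (k:=k) (2*c+1) (v); have g2 := DD_PA (c:=c) (k:=k) (u:=v) (by omega); omega
  · -- u = c, w = 2c+1 / v:A
    rw [h1, h2, hv4]; have g0 := DD_PA (c:=c) (k:=k) (u:=c) (by omega); have g1 := DD_AA (c:=c) (k:=k); omega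
  · -- u = c, w = 2c+1 / v:B
    rw [h1, h2, hv4]; have g0 := DD_PB (c:=c) (k:=k) (u:=c) (by omega); have g1 := DD_AB (c:=c) (k:=k); omega
  · -- u = c, w = 2c+1 / v:C
    rw [h1, h2, hv4]; have g0 := DD_PC (c:=c) (k:=k) (u:=c) (by omega); have g1 := DD_AC (by omega) (by omega) (c:=c) (k:=k); omega
  · -- u = 2c+1, w = 2c+2 / v:P
    rw [h1, h2]; have g0 := DD_symm (c:=c) (k:=k) (2*c+1) (v); have g1 := DD_PA (c:=c) (k:=k) (u:=v) (by omega); have g2 := DD_symm (c:=c) (k:=k) (2*c+2) (v); have g3 := DD_PB (c:=c) (k:=k) (u:=v) (by omega); omega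
  · -- u = 2c+1, w = 2c+2 / v:A
    rw [h1, h2, hv4]; have g0 := DD_AA (c:=c) (k:=k); have g1 := DD_symm (c:=c) (k:=k) (2*c+2) (2*c+1); have g2 := DD_AB (c:=c) (k:=k); omega
  · -- u = 2c+1, w = 2c+2 / v:B
    rw [h1, h2, hv4]; have g0 := DD_AB (c:=c) (k:=k); have g1 := DD_BB (c:=c) (k:=k); omega
  · -- u = 2c+1, w = 2c+2 / v:C
    rw [h1, h2, hv4]; have g0 := DD_AC (by omega) (by omega) (c:=c) (k:=k); have g1 := DD_BC (by omega) (by omega) (c:=c) (k:=k); omega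
  · -- u = c+k-1, w = 2c+3 / v:P
    rw [h1, h2]; have g0 := DD_PP (c:=c) (k:=k) (u:=c+k-1) (v:=v) (by omega) (by omega); have g1 := DD_symm (c:=c) (k:=k) (2*c+3) (v); have g2 := DD_PC (c:=c) (k:=k) (u:=v) (by omega); omega
  · -- u = c+k-1, w = 2c+3 / v:A
    rw [h1, h2, hv4]; have g0 := DD_PA (c:=c) (k:=k) (u:=c+k-1) (by omega); have g1 := DD_symm (c:=c) (k:=k) (2*c+3) (2*c+1); have g2 := DD_AC (by omega) (by omega) (c:=c) (k:=k); omega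
  · -- u = c+k-1, w = 2c+3 / v:B
    rw [h1, h2, hv4]; have g0 := DD_PB (c:=c) (k:=k) (u:=c+k-1) (by omega); have g1 := DD_symm (c:=c) (k:=k) (2*c+3) (2*c+2); have g2 := DD_BC (by omega) (by omega) (c:=c) (k:=k); omega
  · -- u = c+k-1, w = 2c+3 / v:C
    rw [h1, h2, hv4]; have g0 := DD_PC (c:=c) (k:=k) (u:=c+k-1) (by omega); have g1 := DD_CC (c:=c) (k:=k); omega
  · -- u = w+1, path / v:P
    rw [h1]; have g0 := DD_PP (c:=c) (k:=k) (u:=w+1) (v:=v) (by omega) (by omega); have g1 := DD_PP (c:=c) (k:=k) (u:=w) (v:=v) (by omega) (by omega); omega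
  · -- u = w+1, path / v:A
    rw [h1, hv4]; have g0 := DD_PA (c:=c) (k:=k) (u:=w+1) (by omega); have g1 := DD_PA (c:=c) (k:=k) (u:=w) (by omega); omega
  · -- u = w+1, path / v:B
    rw [h1, hv4]; have g0 := DD_PB (c:=c) (k:=k) (u:=w+1) (by omega); have g1 := DD_PB (c:=c) (k:=k) (u:=w) (by omega); omega
  · -- u = w+1, path / v:C
    rw [h1, hv4]; have g0 := DD_PC (c:=c) (k:=k) (u:=w+1) (by omega); have g1 := DD_PC (c:=c) (k:=k) (u:=w) (by omega); omega
  · -- w = c, u = 2c+1 / v:P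
    rw [h1, h2]; have g0 := DD_symm (c:=c) (k:=k) (2*c+1) (v); have g1 := DD_PA (c:=c) (k:=k) (u:=v) (by omega); have g2 := DD_PP (c:=c) (k:=k) (u:=c) (v:=v) (by omega) (by omega); omega
  · -- w = c, u = 2c+1 / v:A
    rw [h1, h2, hv4]; have g0 := DD_AA (c:=c) (k:=k); have g1 := DD_PA (c:=c) (k:=k) (u:=c) (by omega); omega
  · -- w = c, u = 2c+1 / v:B
    rw [h1, h2, hv4]; have g0 := DD_AB (c:=c) (k:=k); have g1 := DD_PB (c:=c) (k:=k) (u:=c) (by omega); omega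
  · -- w = c, u = 2c+1 / v:C
    rw [h1, h2, hv4]; have g0 := DD_AC (by omega) (by omega) (c:=c) (k:=k); have g1 := DD_PC (c:=c) (k:=k) (u:=c) (by omega); omega
  · -- w = 2c+1, u = 2c+2 / v:P
    rw [h1, h2]; have g0 := DD_symm (c:=c) (k:=k) (2*c+2) (v); have g1 := DD_PB (c:=c) (k:=k) (u:=v) (by omega); have g2 := DD_symm (c:=c) (k:=k) (2*c+1) (v); have g3 := DD_PA (c:=c) (k:=k) (u:=v) (by omega); omega
  · -- w = 2c+1, u = 2c+2 / v:A
    rw [h1, h2, hv4]; have g0 := DD_symm (c:=c) (k:=k) (2*c+2) (2*c+1); have g1 := DD_AB (c:=c) (k:=k); have g2 := DD_AA (c:=c) (k:=k); omega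
  · -- w = 2c+1, u = 2c+2 / v:B
    rw [h1, h2, hv4]; have g0 := DD_BB (c:=c) (k:=k); have g1 := DD_AB (c:=c) (k:=k); omega
  · -- w = 2c+1, u = 2c+2 / v:C
    rw [h1, h2, hv4]; have g0 := DD_BC (by omega) (by omega) (c:=c) (k:=k); have g1 := DD_AC (by omega) (by omega) (c:=c) (k:=k); omega
  · -- w = c+k-1, u = 2c+3 / v:P
    rw [h1, h2]; have g0 := DD_symm (c:=c) (k:=k) (2*c+3) (v); have g1 := DD_PC (c:=c) (k:=k) (u:=v) (by omega); have g2 := DD_PP (c:=c) (k:=k) (u:=c+k-1) (v:=v) (by omega) (by omega); omega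
  · -- w = c+k-1, u = 2c+3 / v:A
    rw [h1, h2, hv4]; have g0 := DD_symm (c:=c) (k:=k) (2*c+3) (2*c+1); have g1 := DD_AC (by omega) (by omega) (c:=c) (k:=k); have g2 := DD_PA (c:=c) (k:=k) (u:=c+k-1) (by omega); omega
  · -- w = c+k-1, u = 2c+3 / v:B
    rw [h1, h2, hv4]; have g0 := DD_symm (c:=c) (k:=k) (2*c+3) (2*c+2); have g1 := DD_BC (by omega) (by omega) (c:=c) (k:=k); have g2 := DD_PB (c:=c) (k:=k) (u:=c+k-1) (by omega); omega
  · -- w = c+k-1, u = 2c+3 / v:C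
    rw [h1, h2, hv4]; have g0 := DD_CC (c:=c) (k:=k); have g1 := DD_PC (c:=c) (k:=k) (u:=c+k-1) (by omega); omega

lemma DD_step (hk : 3 ≤ k) (hkc : k ≤ c) {u v : ℕ} (hu : u < 2*c+4) (hv : v < 2*c+4)
    (hne : u ≠ v) : ∃ w, w < 2*c+4 ∧ erel c k u w ∧ DD c k w v + 1 = DD c k u v := by
  have hu4 : u ≤ 2*c ∨ u = 2*c+1 ∨ u = 2*c+2 ∨ u = 2*c+3 := by omega
  have hv4 : v ≤ 2*c ∨ v = 2*c+1 ∨ v = 2*c+2 ∨ v = 2*c+3 := by omega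
  unfold erel
  rcases hu4 with hu4|hu4|hu4|hu4 <;> rcases hv4 with hv4|hv4|hv4|hv4
  · -- P P
    rcases Nat.lt_or_ge u v with h|h
    · refine ⟨u+1, by omega, by omega, ?_⟩
      have g0 := DD_PP (c:=c) (k:=k) (u:=u+1) (v:=v) (by omega) (by omega)
      have g1 := DD_PP (c:=c) (k:=k) (u:=u) (v:=v) (by omega) (by omega); omega
    · refine ⟨u-1, by omega, by omega, ?_⟩
      have g0 := DD_PP (c:=c) (k:=k) (u:=u-1) (v:=v) (by omega) (by omega)
      have g1 := DD_PP (c:=c) (k:=k) (u:=u) (v:=v) (by omega) (by omega); omega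
  · -- P A
    subst hv4
    rcases Nat.lt_trichotomy u c with h|h|h
    · refine ⟨u+1, by omega, by omega, ?_⟩
      have g0 := DD_PA (c:=c) (k:=k) (u:=u+1) (by omega)
      have g1 := DD_PA (c:=c) (k:=k) (u:=u) (by omega); omega
    · refine ⟨2*c+1, by omega, by omega, ?_⟩
      have g0 := DD_AA (c:=c) (k:=k)
      have g1 := DD_PA (c:=c) (k:=k) (u:=u) (by omega); omega
    · refine ⟨u-1, by omega, by omega, ?_⟩
      have g0 := DD_PA (c:=c) (k:=k) (u:=u-1) (by omega)
      have g1 := DD_PA (c:=c) (k:=k) (u:=u) (by omega); omega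
  · -- P B
    subst hv4
    rcases Nat.lt_trichotomy u c with h|h|h
    · refine ⟨u+1, by omega, by omega, ?_⟩
      have g0 := DD_PB (c:=c) (k:=k) (u:=u+1) (by omega)
      have g1 := DD_PB (c:=c) (k:=k) (u:=u) (by omega); omega
    · refine ⟨2*c+1, by omega, by omega, ?_⟩
      have g0 := DD_AB (c:=c) (k:=k)
      have g1 := DD_PB (c:=c) (k:=k) (u:=u) (by omega); omega
    · refine ⟨u-1, by omega, by omega, ?_⟩
      have g0 := DD_PB (c:=c) (k:=k) (u:=u-1) (by omega)
      have g1 := DD_PB (c:=c) (k:=k) (u:=u) (by omega); omega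
  · -- P C
    subst hv4
    rcases Nat.lt_trichotomy u (c+k-1) with h|h|h
    · refine ⟨u+1, by omega, by omega, ?_⟩
      have g0 := DD_PC (c:=c) (k:=k) (u:=u+1) (by omega)
      have g1 := DD_PC (c:=c) (k:=k) (u:=u) (by omega); omega
    · refine ⟨2*c+3, by omega, by omega, ?_⟩
      have g0 := DD_CC (c:=c) (k:=k)
      have g1 := DD_PC (c:=c) (k:=k) (u:=u) (by omega); omega
    · refine ⟨u-1, by omega, by omega, ?_⟩
      have g0 := DD_PC (c:=c) (k:=k) (u:=u-1) (by omega)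
      have g1 := DD_PC (c:=c) (k:=k) (u:=u) (by omega); omega
  · -- A P
    subst hu4
    refine ⟨c, by omega, by omega, ?_⟩
    have g0 := DD_PP (c:=c) (k:=k) (u:=c) (v:=v) (by omega) (by omega)
    have g1 := DD_symm (c:=c) (k:=k) (2*c+1) v
    have g2 := DD_PA (c:=c) (k:=k) (u:=v) (by omega); omega
  · -- A A impossible
    omega
  · -- A B
    subst hu4 hv4
    refine ⟨2*c+2, by omega, by omega, ?_⟩
    have g0 := DD_BB (c:=c) (k:=k)
    have g1 := DD_AB (c:=c) (k:=k); omega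
  · -- A C
    subst hu4 hv4
    refine ⟨c, by omega, by omega, ?_⟩
    have g0 := DD_PC (c:=c) (k:=k) (u:=c) (by omega)
    have g1 := DD_AC (c:=c) (k:=k) (by omega) (by omega); omega
  · -- B P
    subst hu4
    refine ⟨2*c+1, by omega, by omega, ?_⟩
    have g0 := DD_symm (c:=c) (k:=k) (2*c+1) v
    have g1 := DD_PA (c:=c) (k:=k) (u:=v) (by omega)
    have g2 := DD_symm (c:=c) (k:=k) (2*c+2) v
    have g3 := DD_PB (c:=c) (k:=k) (u:=v) (by omega); omega
  · -- B A
    subst hu4 hv4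
    refine ⟨2*c+1, by omega, by omega, ?_⟩
    have g0 := DD_AA (c:=c) (k:=k)
    have g1 := DD_symm (c:=c) (k:=k) (2*c+2) (2*c+1)
    have g2 := DD_AB (c:=c) (k:=k); omega
  · -- B B impossible
    omega
  · -- B C
    subst hu4 hv4
    refine ⟨2*c+1, by omega, by omega, ?_⟩
    have g0 := DD_AC (c:=c) (k:=k) (by omega) (by omega)
    have g1 := DD_BC (c:=c) (k:=k) (by omega) (by omega); omega
  · -- C P
    subst hu4
    refine ⟨c+k-1, by omega, by omega, ?_⟩
    have g0 := DD_PP (c:=c) (k:=k) (u:=c+k-1) (v:=v) (by omega) (by omega)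
    have g1 := DD_symm (c:=c) (k:=k) (2*c+3) v
    have g2 := DD_PC (c:=c) (k:=k) (u:=v) (by omega); omega
  · -- C A
    subst hu4 hv4
    refine ⟨c+k-1, by omega, by omega, ?_⟩
    have g0 := DD_PA (c:=c) (k:=k) (u:=c+k-1) (by omega)
    have g1 := DD_symm (c:=c) (k:=k) (2*c+3) (2*c+1)
    have g2 := DD_AC (c:=c) (k:=k) (by omega) (by omega); omega
  · -- C B
    subst hu4 hv4
    refine ⟨c+k-1, by omega, by omega, ?_⟩
    have g0 := DD_PB (c:=c) (k:=k) (u:=c+k-1) (by omega)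
    have g1 := DD_symm (c:=c) (k:=k) (2*c+3) (2*c+2)
    have g2 := DD_BC (c:=c) (k:=k) (by omega) (by omega); omega
  · -- C C impossible
    omega



lemma dist_eq_of_D {V : Type*} (G : SimpleGraph V) (D : V → V → ℕ)
    (hdiag : ∀ x, D x x = 0)
    (hstep : ∀ x y, x ≠ y → ∃ z, G.Adj x z ∧ D z y + 1 = D x y)
    (hlip : ∀ x y z, G.Adj x z → D x y ≤ D z y + 1) :
    ∀ x y, G.dist x y = D x y := by
  have hupper : ∀ n x y, D x y = n → ∃ w : G.Walk x y, w.length = n := by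
    intro n
    induction n using Nat.strong_induction_on with
    | _ n ih =>
      intro x y hxy
      by_cases hxeq : x = y
      · subst hxeq
        refine ⟨SimpleGraph.Walk.nil, ?_⟩
        rw [SimpleGraph.Walk.length_nil, hdiag] at *
        omega
      · obtain ⟨z, hadj, hz⟩ := hstep x y hxeq
        have hlt : D z y < n := by omega
        obtain ⟨w, hw⟩ := ih (D z y) hlt z y rfl
        exact ⟨SimpleGraph.Walk.cons hadj w, by simp [hw]; omega⟩
  have hlower : ∀ x y (w : G.Walk x y), D x y ≤ w.length := by
    intro x y w
    induction w with
    | nil => simp [hdiag]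
    | @cons a b c h p ih =>
      have := hlip a c b h
      simp only [SimpleGraph.Walk.length_cons]
      omega
  intro x y
  obtain ⟨w, hw⟩ := hupper (D x y) x y rfl
  have h1 : G.dist x y ≤ D x y := hw ▸ SimpleGraph.dist_le w
  have hreach : G.Reachable x y := ⟨w⟩
  obtain ⟨p, _, hp⟩ := hreach.exists_path_of_dist
  have h2 : D x y ≤ G.dist x y := hp ▸ hlower x y p
  omega

set_option maxHeartbeats 1000000 in
lemma adj_iff (x y : Fin (2*c+1+3)) :
    (varCaterpillar (2*c+1) (c+1) (c+k)).Adj x y ↔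
      (x.val ≠ y.val ∧ erel c k x.val y.val) := by
  rw [varCaterpillar, SimpleGraph.fromRel_adj]
  unfold erel
  rw [ne_eq, Fin.ext_iff, show c+1-1 = c from rfl]
  tauto

lemma dist_eq (hk : 3 ≤ k) (hkc : k ≤ c) (x y : Fin (2*c+1+3)) :
    (varCaterpillar (2*c+1) (c+1) (c+k)).dist x y = DD c k x.val y.val := by
  refine dist_eq_of_D _ (fun u v => DD c k u.val v.val) ?_ ?_ ?_ x y
  · intro x; exact DD_diag (by omega)
  · intro x y hne
    have hne' : x.val ≠ y.val := fun h => hne (Fin.ext h)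
    obtain ⟨w, hw, hrel, heq⟩ := DD_step hk hkc (u := x.val) (v := y.val)
      (by omega) (by omega) hne'
    refine ⟨⟨w, by omega⟩, ?_, heq⟩
    rw [adj_iff]
    refine ⟨fun hcontra => ?_, hrel⟩
    have hxw : x.val = w := hcontra
    rw [hxw] at heq
    omega
  · intro x y z hadj
    rw [adj_iff] at hadj
    exact DD_lip hk hkc (by omega) hadj.2

def TR (c k p : ℕ) : ℕ := ∑ j ∈ Finset.range (2*c+4), DD c k p j

lemma transmission_eq (hk : 3 ≤ k) (hkc : k ≤ c) (v : Fin (2*c+1+3)) :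
    transmission (varCaterpillar (2*c+1) (c+1) (c+k)) v = TR c k v.val := by
  unfold transmission TR
  rw [← Fin.sum_univ_eq_sum_range (fun j => DD c k v.val j) (2*c+4)]
  exact Finset.sum_congr rfl (fun u _ => dist_eq hk hkc v u)

lemma sum_natAbs (N : ℕ) : ∀ p ≤ N, 2 * ∑ j ∈ Finset.range (N+1), ((p:ℤ) - j).natAbs
    = p*(p+1) + (N-p)*(N-p+1) := by
  induction N with
  | zero => intro p hp; interval_cases p; simp
  | succ N ih =>
    intro p hp
    rcases Nat.lt_or_ge p (N+1) with h|h
    · have hp' : p ≤ N := by omega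
      have e := ih p hp'
      rw [Finset.sum_range_succ, Nat.mul_add, e]
      have h1 : ((p:ℤ) - (N+1:ℕ)).natAbs = N+1-p := by omega
      rw [h1]
      obtain ⟨q, rfl⟩ : ∃ q, N = p + q := ⟨N-p, by omega⟩
      have e2 : p + q - p = q := by omega
      have e3 : p + q + 1 - p = q + 1 := by omega
      rw [e2, e3]
      ring
    · have hp' : p = N+1 := by omega
      subst hp'
      have e : ∑ j ∈ Finset.range (N+1+1), (((N+1:ℕ):ℤ) - j).natAbs
          = ∑ j ∈ Finset.range (N+1+1), (N+1-j) := by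
        refine Finset.sum_congr rfl (fun j hj => ?_)
        rw [Finset.mem_range] at hj
        omega
      rw [e]
      have e2 : ∑ j ∈ Finset.range (N+1+1), (N+1-j) = ∑ j ∈ Finset.range (N+1+1), j := by
        simpa using Finset.sum_range_reflect (fun j => j) (N+1+1)
      rw [e2, Nat.mul_comm 2, Finset.sum_range_id_mul_two]
      simp [Nat.sub_self]
      ring

lemma TR_P (hk : 3 ≤ k) (hkc : k ≤ c) {p : ℕ} (hp : p ≤ 2*c) :
    2 * TR c k p = p*(p+1) + (2*c-p)*(2*c-p+1)
      + 4*((p:ℤ)-c).natAbs + 2*((p:ℤ)-c-k+1).natAbs + 8 := by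
  unfold TR
  rw [show 2*c+4 = (2*c+1)+1+1+1 from rfl, Finset.sum_range_succ, Finset.sum_range_succ,
    Finset.sum_range_succ, show (2*c+1)+1+1 = 2*c+3 from rfl, show (2*c+1)+1 = 2*c+2 from rfl]
  rw [DD_PA hp, DD_PB hp, DD_PC hp]
  have hmain : ∑ j ∈ Finset.range (2*c+1), DD c k p j
      = ∑ j ∈ Finset.range (2*c+1), ((p:ℤ)-j).natAbs := by
    refine Finset.sum_congr rfl (fun j hj => ?_)
    rw [Finset.mem_range] at hj
    exact DD_PP hp (by omega)
  rw [hmain]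
  have hsum := sum_natAbs (2*c) p hp
  linarith

lemma TR_A (hk : 3 ≤ k) (hkc : k ≤ c) :
    2 * TR c k (2*c+1) = 2*(c*(c+1)) + 4*c + 2*k + 6 := by
  unfold TR
  rw [show 2*c+4 = (2*c+1)+1+1+1 from rfl, Finset.sum_range_succ, Finset.sum_range_succ,
    Finset.sum_range_succ, show (2*c+1)+1+1 = 2*c+3 from rfl, show (2*c+1)+1 = 2*c+2 from rfl]
  rw [DD_AA, DD_AB, DD_AC (by omega) hkc]
  have hmain : ∑ j ∈ Finset.range (2*c+1), DD c k (2*c+1) j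
      = ∑ j ∈ Finset.range (2*c+1), (((c:ℤ)-j).natAbs + 1) := by
    refine Finset.sum_congr rfl (fun j hj => ?_)
    rw [Finset.mem_range] at hj
    have g0 := DD_symm (c:=c) (k:=k) (2*c+1) j
    have g1 := DD_PA (c:=c) (k:=k) (u:=j) (by omega)
    omega
  rw [hmain, Finset.sum_add_distrib, Finset.sum_const, Finset.card_range]
  simp only [smul_eq_mul]
  have hsum := sum_natAbs (2*c) c (by omega)
  have e : 2*c - c = c := by omega
  rw [e] at hsum
  linarith

lemma TR_B (hk : 3 ≤ k) (hkc : k ≤ c) :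
    2 * TR c k (2*c+2) = 2*(c*(c+1)) + 8*c + 2*k + 10 := by
  unfold TR
  rw [show 2*c+4 = (2*c+1)+1+1+1 from rfl, Finset.sum_range_succ, Finset.sum_range_succ,
    Finset.sum_range_succ, show (2*c+1)+1+1 = 2*c+3 from rfl, show (2*c+1)+1 = 2*c+2 from rfl]
  rw [DD_BB, DD_BC (by omega) hkc]
  have hab : DD c k (2*c+2) (2*c+1) = 1 := by
    have g0 := DD_symm (c:=c) (k:=k) (2*c+2) (2*c+1)
    have g1 := DD_AB (c:=c) (k:=k)
    omega
  rw [hab]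
  have hmain : ∑ j ∈ Finset.range (2*c+1), DD c k (2*c+2) j
      = ∑ j ∈ Finset.range (2*c+1), (((c:ℤ)-j).natAbs + 2) := by
    refine Finset.sum_congr rfl (fun j hj => ?_)
    rw [Finset.mem_range] at hj
    have g0 := DD_symm (c:=c) (k:=k) (2*c+2) j
    have g1 := DD_PB (c:=c) (k:=k) (u:=j) (by omega)
    omega
  rw [hmain, Finset.sum_add_distrib, Finset.sum_const, Finset.card_range]
  simp only [smul_eq_mul]
  have hsum := sum_natAbs (2*c) c (by omega)
  have e : 2*c - c = c := by omega
  rw [e] at hsum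
  linarith

lemma TR_C (hk : 3 ≤ k) (hkc : k ≤ c) :
    2 * TR c k (2*c+3) = (c+k-1)*((c+k-1)+1) + (2*c-(c+k-1))*((2*c-(c+k-1))+1)
      + 2*(2*c+1) + 4*k + 6 := by
  unfold TR
  rw [show 2*c+4 = (2*c+1)+1+1+1 from rfl, Finset.sum_range_succ, Finset.sum_range_succ,
    Finset.sum_range_succ, show (2*c+1)+1+1 = 2*c+3 from rfl, show (2*c+1)+1 = 2*c+2 from rfl]
  rw [DD_CC]
  have hca : DD c k (2*c+3) (2*c+1) = k+1 := by
    have g0 := DD_symm (c:=c) (k:=k) (2*c+3) (2*c+1)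
    have g1 := DD_AC (c:=c) (k:=k) (by omega) hkc
    omega
  have hcb : DD c k (2*c+3) (2*c+2) = k+2 := by
    have g0 := DD_symm (c:=c) (k:=k) (2*c+3) (2*c+2)
    have g1 := DD_BC (c:=c) (k:=k) (by omega) hkc
    omega
  rw [hca, hcb]
  have hmain : ∑ j ∈ Finset.range (2*c+1), DD c k (2*c+3) j
      = ∑ j ∈ Finset.range (2*c+1), ((((c+k-1:ℕ):ℤ)-j).natAbs + 1) := by
    refine Finset.sum_congr rfl (fun j hj => ?_)
    rw [Finset.mem_range] at hj
    have g0 := DD_symm (c:=c) (k:=k) (2*c+3) j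
    have g1 := DD_PC (c:=c) (k:=k) (u:=j) (by omega)
    omega
  rw [hmain, Finset.sum_add_distrib, Finset.sum_const, Finset.card_range]
  simp only [smul_eq_mul]
  have hsum := sum_natAbs (2*c) (c+k-1) (by omega)
  linarith



lemma pell15 (a b : ℤ) : a^2 ≠ 2*b^2 + 15 := by
  intro h
  have h5 : ∀ u v : ZMod 5, u^2 = 2*v^2 → u = 0 ∧ v = 0 := by decide
  have h15 : (15 : ZMod 5) = 0 := by decide
  have ha : ((a : ZMod 5))^2 = 2*((b : ZMod 5))^2 := by
    have := congrArg (fun n : ℤ => (n : ZMod 5)) h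
    push_cast at this
    rw [this, h15, add_zero]
  obtain ⟨ha0, hb0⟩ := h5 _ _ ha
  rw [ZMod.intCast_zmod_eq_zero_iff_dvd] at ha0 hb0
  obtain ⟨a', rfl⟩ := ha0
  obtain ⟨b', rfl⟩ := hb0
  have h3 : 5*(5*a'^2) = 5*(10*b'^2 + 3) := by linear_combination h
  have h4 : 5*a'^2 = 10*b'^2 + 3 := by
    have := mul_left_cancel₀ (show (5:ℤ) ≠ 0 by norm_num) h3
    exact this
  have h5d : (5:ℤ) ∣ 3 := ⟨a'^2 - 2*b'^2, by linarith⟩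
  norm_num at h5d



section Core

/-- path-path collisions are impossible -/
lemma core_pp {K : ℤ} (hK : 3 ≤ K) {x y : ℤ} (hxy : x < y)
    (h : 2*x^2+4*|x|+2*|x-K+1| = 2*y^2+4*|y|+2*|y-K+1|) : False := by
  rcases lt_or_ge y 0 with hy|hy
  · rw [abs_of_neg (show x < 0 by linarith), abs_of_neg hy,
      abs_of_neg (show x-K+1 < 0 by linarith), abs_of_neg (show y-K+1 < 0 by linarith)] at h
    have hprod : (x - y) * (x + y - 3) * 2 = 0 := by linear_combination h
    nlinarith [mul_pos_of_neg_of_neg (show x - y < 0 by linarith) (show x + y - 3 < 0 by linarith)]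
  · rcases lt_or_ge x 0 with hx|hx
    · rw [abs_of_neg hx, abs_of_nonneg hy, abs_of_neg (show x-K+1 < 0 by linarith)] at h
      rcases le_or_gt y (K-1) with hyK|hyK
      · rw [abs_of_nonpos (show y-K+1 ≤ 0 by linarith)] at h
        -- x^2-3x = y^2+y
        have hx1 : x ≤ -1 := by omega
        rcases le_or_gt (-x) (y-1) with hc1|hc1
        · nlinarith [mul_nonneg (show (0:ℤ) ≤ y-1-(-x) by linarith)
            (show (0:ℤ) ≤ y-1+(-x) by linarith)]
        · nlinarith [mul_nonneg (show (0:ℤ) ≤ -x-y by linarith)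
            (show (0:ℤ) ≤ -x+y by linarith)]
      · rw [abs_of_pos (show 0 < y-K+1 by linarith)] at h
        have hyK' : K ≤ y := by omega
        have hprod : (y + x) * (y - x + 3) * 2 = (2*K - 2) * 2 := by linear_combination -h
        have h3 : y + x ≤ 0 ∨ y + x = 1 ∨ 2 ≤ y + x := by omega
        rcases h3 with h3|h3|h3
        · nlinarith [mul_nonpos_of_nonpos_of_nonneg h3 (show (0:ℤ) ≤ y - x + 3 by linarith)]
        · nlinarith
        · nlinarith [mul_le_mul h3 (le_refl (y-x+3)) (by linarith) (by linarith),
            (show K + 4 ≤ y - x + 3 by linarith)]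
    · rcases le_or_gt y (K-1) with hyK|hyK
      · rw [abs_of_nonneg hx, abs_of_nonneg hy, abs_of_nonpos (show x-K+1 ≤ 0 by linarith),
          abs_of_nonpos (show y-K+1 ≤ 0 by linarith)] at h
        have hprod : (x - y) * (x + y + 1) * 2 = 0 := by linear_combination h
        nlinarith [mul_neg_of_neg_of_pos (show x - y < 0 by linarith)
          (show 0 < x + y + 1 by linarith)]
      · rcases le_or_gt x (K-1) with hxK|hxK
        · rw [abs_of_nonneg hx, abs_of_nonneg hy, abs_of_nonpos (show x-K+1 ≤ 0 by linarith),
            abs_of_pos (show 0 < y-K+1 by linarith)] at h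
          have hyK' : K ≤ y := by omega
          have hprod : (y - x + 1) * (y + x + 2) * 2 = (2*K) * 2 := by linear_combination -h
          nlinarith [mul_le_mul (show 2 ≤ y - x + 1 by linarith) (show K + 2 ≤ y + x + 2 by linarith)
            (by linarith) (by linarith)]
        · rw [abs_of_nonneg hx, abs_of_nonneg hy, abs_of_pos (show 0 < x-K+1 by linarith),
            abs_of_pos (show 0 < y-K+1 by linarith)] at h
          have hprod : (x - y) * (x + y + 3) * 2 = 0 := by linear_combination h
          nlinarith [mul_neg_of_neg_of_pos (show x - y < 0 by linarith)
            (show 0 < x + y + 3 by linarith)]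

lemma core_pa {K : ℤ} (hK : 3 ≤ K) {x : ℤ} (h : 2*x^2+4*|x|+2*|x-K+1| = 2*K^2+4*K-2) : False := by
  rcases lt_or_ge x 0 with hx|hx
  · rw [abs_of_neg hx, abs_of_neg (show x-K+1 < 0 by linarith)] at h
    -- x^2-3x = K^2+K  with z=-x ≥ 1
    rcases le_or_gt (-x) (K-1) with hc|hc
    · nlinarith [mul_nonneg (show (0:ℤ) ≤ K-1+x by linarith) (show (0:ℤ) ≤ K-1-x by linarith)]
    · have : K ≤ -x := by omega
      nlinarith [mul_nonneg (show (0:ℤ) ≤ -x-K by linarith) (show (0:ℤ) ≤ -x+K by linarith)]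
  · rcases le_or_gt x (K-1) with hxK|hxK
    · rw [abs_of_nonneg hx, abs_of_nonpos (show x-K+1 ≤ 0 by linarith)] at h
      nlinarith [mul_nonneg (show (0:ℤ) ≤ K-1-x by linarith) (show (0:ℤ) ≤ K-1+x by linarith)]
    · rw [abs_of_nonneg hx, abs_of_pos (show 0 < x-K+1 by linarith)] at h
      have hxK' : K ≤ x := by omega
      have hprod : (x - K) * (x + K + 3) * 2 = -2 * 2 := by linear_combination h
      nlinarith [mul_nonneg (show (0:ℤ) ≤ x - K by linarith) (show (0:ℤ) ≤ x + K + 3 by linarith)]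

lemma core_pb {K : ℤ} (hK : 3 ≤ K) {x : ℤ} (h : 2*x^2+4*|x|+2*|x-K+1| = 4*K^2+6*K+2) :
    ∃ x' : ℤ, 0 ≤ x' ∧ x'^2+3*x' = 2*K^2+4*K := by
  rcases lt_or_ge x 0 with hx|hx
  · rw [abs_of_neg hx, abs_of_neg (show x-K+1 < 0 by linarith)] at h
    -- (-x)^2+3(-x) = 2K^2+2K+2  ⇒ (2z+3)^2 = 8K^2+8K+17 = 2(2K+1)^2+15
    exfalso
    refine pell15 (2*(-x)+3) (2*K+1) ?_
    linear_combination 2*h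
  · rcases le_or_gt x (K-1) with hxK|hxK
    · exfalso
      rw [abs_of_nonneg hx, abs_of_nonpos (show x-K+1 ≤ 0 by linarith)] at h
      nlinarith [mul_nonneg (show (0:ℤ) ≤ K-1-x by linarith) (show (0:ℤ) ≤ K-1+x by linarith)]
    · rw [abs_of_nonneg hx, abs_of_pos (show 0 < x-K+1 by linarith)] at h
      exact ⟨x, by linarith, by linarith⟩

lemma core_pc {K : ℤ} (hK : 3 ≤ K) {x : ℤ} (h : 2*x^2+4*|x|+2*|x-K+1| = 4*K^2+2*K+2) :
    (∃ z : ℤ, 1 ≤ z ∧ z^2+3*z = 2*K^2+2) ∨ (∃ x' : ℤ, 0 ≤ x' ∧ x'^2+3*x' = 2*K^2+2*K) := by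
  rcases lt_or_ge x 0 with hx|hx
  · rw [abs_of_neg hx, abs_of_neg (show x-K+1 < 0 by linarith)] at h
    exact Or.inl ⟨-x, by omega, by linarith⟩
  · rcases le_or_gt x (K-1) with hxK|hxK
    · exfalso
      rw [abs_of_nonneg hx, abs_of_nonpos (show x-K+1 ≤ 0 by linarith)] at h
      nlinarith [mul_nonneg (show (0:ℤ) ≤ K-1-x by linarith) (show (0:ℤ) ≤ K-1+x by linarith)]
    · rw [abs_of_nonneg hx, abs_of_pos (show 0 < x-K+1 by linarith)] at h
      exact Or.inr ⟨x, by linarith, by linarith⟩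

end Core

section TRint
variable {c k : ℕ}

lemma TR_P_int (hk : 3 ≤ k) (hkc : k ≤ c) {p : ℕ} (hp : p ≤ 2*c) :
    (2 * TR c k p : ℤ) = 2*(c:ℤ)^2 + 2*c + 2*((p:ℤ)-c)^2 + 4*|(p:ℤ)-c| + 2*|(p:ℤ)-c-k+1| + 8 := by
  have h := TR_P hk hkc hp
  have hcast := congrArg (Nat.cast : ℕ → ℤ) h
  push_cast [hp, Int.natCast_natAbs] at hcast
  rw [show ((2:ℤ) * TR c k p) = ((2 * TR c k p : ℕ) : ℤ) by push_cast; ring]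
  push_cast
  linear_combination hcast

lemma TR_A_int (hk : 3 ≤ k) (hkc : k ≤ c) :
    (2 * TR c k (2*c+1) : ℤ) = 2*(c:ℤ)^2 + 6*c + 2*k + 6 := by
  have h := TR_A hk hkc
  have hcast := congrArg (Nat.cast : ℕ → ℤ) h
  push_cast at hcast
  linear_combination hcast

lemma TR_B_int (hk : 3 ≤ k) (hkc : k ≤ c) :
    (2 * TR c k (2*c+2) : ℤ) = 2*(c:ℤ)^2 + 10*c + 2*k + 10 := by
  have h := TR_B hk hkc
  have hcast := congrArg (Nat.cast : ℕ → ℤ) h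
  push_cast at hcast
  linear_combination hcast

lemma TR_C_int (hk : 3 ≤ k) (hkc : k ≤ c) :
    (2 * TR c k (2*c+3) : ℤ) = 2*(c:ℤ)^2 + 6*c + 2*((k:ℤ)-1)^2 + 4*k + 8 := by
  have h := TR_C hk hkc
  have hcast := congrArg (Nat.cast : ℕ → ℤ) h
  push_cast [show 1 ≤ c + k by omega, show c+k-1 ≤ 2*c by omega] at hcast
  linear_combination hcast

end TRint

section Inj
variable {c k : ℕ}

lemma TR_ne (hk : 3 ≤ k) (hc : 2*c = k*k + k)
    (hs1 : ¬ IsPerfectSquare (8*k*k+17)) (hs2 : ¬ IsPerfectSquare (8*k*k+8*k+9))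
    (hs3 : ¬ IsPerfectSquare (8*k*k+16*k+9))
    {p q : ℕ} (hpq : p < q) (hq : q < 2*c+4) : TR c k p ≠ TR c k q := by
  intro h
  have hkk : 3*k ≤ k*k := Nat.mul_le_mul_right k hk
  have hkc : k ≤ c := by omega
  have hK : 3 ≤ (k:ℤ) := by exact_mod_cast hk
  have hc' : 2*(c:ℤ) = (k:ℤ)^2 + (k:ℤ) := by
    have := congrArg (Nat.cast : ℕ → ℤ) hc
    push_cast at this
    linear_combination this
  have h2 : ((TR c k p : ℕ) : ℤ) = ((TR c k q : ℕ) : ℤ) := by exact_mod_cast h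
  have hq4 : q ≤ 2*c ∨ q = 2*c+1 ∨ q = 2*c+2 ∨ q = 2*c+3 := by omega
  rcases hq4 with hq4|hq4|hq4|hq4
  · -- both path
    have e1 := TR_P_int hk hkc (show p ≤ 2*c by omega)
    have e2 := TR_P_int hk hkc (show q ≤ 2*c by omega)
    refine core_pp hK (show (p:ℤ)-c < (q:ℤ)-c by push_cast; omega) ?_
    linear_combination e2 - e1 + 2*h2
  · -- p path, q = A
    subst hq4
    have e1 := TR_P_int hk hkc (show p ≤ 2*c by omega)
    have e2 := TR_A_int (c:=c) (k:=k) hk hkc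
    refine core_pa hK (x := (p:ℤ)-c) ?_
    linear_combination e2 - e1 + 2*h2 + 2*hc'
  · -- q = B
    subst hq4
    have hp4 : p ≤ 2*c ∨ p = 2*c+1 := by omega
    have e2 := TR_B_int (c:=c) (k:=k) hk hkc
    rcases hp4 with hp4|hp4
    · have e1 := TR_P_int hk hkc hp4
      have heq : 2*((p:ℤ)-c)^2+4*|(p:ℤ)-c|+2*|(p:ℤ)-c-k+1| = 4*(k:ℤ)^2+6*(k:ℤ)+2 := by
        linear_combination e2 - e1 + 2*h2 + 4*hc'
      obtain ⟨x', hx'0, hx'⟩ := core_pb hK heq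
      refine hs3 ⟨(2*x'+3).toNat, ?_⟩
      have hnn : (0:ℤ) ≤ 2*x'+3 := by linarith
      have : ((8*k*k+16*k+9 : ℕ) : ℤ) = ((2*x'+3).toNat : ℤ) * ((2*x'+3).toNat : ℤ) := by
        rw [Int.toNat_of_nonneg hnn]
        push_cast
        linear_combination (-4)*hx'
      exact_mod_cast this
    · subst hp4
      have e1 := TR_A_int (c:=c) (k:=k) hk hkc
      have : (4:ℤ)*c + 4 = 0 := by linear_combination e1 - e2 - 2*h2
      have hc0 : (0:ℤ) ≤ c := Int.natCast_nonneg c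
      linarith
  · -- q = C
    subst hq4
    have hp4 : p ≤ 2*c ∨ p = 2*c+1 ∨ p = 2*c+2 := by omega
    have e2 := TR_C_int (c:=c) (k:=k) hk hkc
    rcases hp4 with hp4|hp4|hp4
    · have e1 := TR_P_int hk hkc hp4
      have heq : 2*((p:ℤ)-c)^2+4*|(p:ℤ)-c|+2*|(p:ℤ)-c-k+1| = 4*(k:ℤ)^2+2*(k:ℤ)+2 := by
        linear_combination e2 - e1 + 2*h2 + 2*hc'
      rcases core_pc hK heq with ⟨z, hz1, hz⟩ | ⟨x', hx'0, hx'⟩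
      · refine hs1 ⟨(2*z+3).toNat, ?_⟩
        have hnn : (0:ℤ) ≤ 2*z+3 := by linarith
        have : ((8*k*k+17 : ℕ) : ℤ) = ((2*z+3).toNat : ℤ) * ((2*z+3).toNat : ℤ) := by
          rw [Int.toNat_of_nonneg hnn]
          push_cast
          linear_combination (-4)*hz
        exact_mod_cast this
      · refine hs2 ⟨(2*x'+3).toNat, ?_⟩
        have hnn : (0:ℤ) ≤ 2*x'+3 := by linarith
        have : ((8*k*k+8*k+9 : ℕ) : ℤ) = ((2*x'+3).toNat : ℤ) * ((2*x'+3).toNat : ℤ) := by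
          rw [Int.toNat_of_nonneg hnn]
          push_cast
          linear_combination (-4)*hx'
        exact_mod_cast this
    · subst hp4
      have e1 := TR_A_int (c:=c) (k:=k) hk hkc
      have : 2*((k:ℤ)-1)^2 + 2*(k:ℤ) + 2 = 0 := by linear_combination e1 - e2 - 2*h2
      nlinarith [sq_nonneg ((k:ℤ)-1)]
    · subst hp4
      have e1 := TR_B_int (c:=c) (k:=k) hk hkc
      have : (4:ℤ)*k = 0 := by linear_combination e2 - e1 + 2*h2 - 2*hc'
      linarith

lemma TR_inj (hk : 3 ≤ k) (hc : 2*c = k*k + k)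
    (hs1 : ¬ IsPerfectSquare (8*k*k+17)) (hs2 : ¬ IsPerfectSquare (8*k*k+8*k+9))
    (hs3 : ¬ IsPerfectSquare (8*k*k+16*k+9))
    {p q : ℕ} (hp : p < 2*c+4) (hq : q < 2*c+4) (h : TR c k p = TR c k q) : p = q := by
  rcases Nat.lt_trichotomy p q with hpq|hpq|hpq
  · exact absurd h (TR_ne hk hc hs1 hs2 hs3 hpq hq)
  · exact hpq
  · exact absurd h.symm (TR_ne hk hc hs1 hs2 hs3 hpq hp)

end Inj

set_option maxHeartbeats 3200000 in
theorem main_iff (c k : ℕ) (hk : 3 ≤ k) (hc : 2*c = k*k + k) :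
    TransIrregular (varCaterpillar (2*c+1) (c+1) (c+k)) ↔
      (¬ IsPerfectSquare (8*k*k+17) ∧ ¬ IsPerfectSquare (8*k*k+8*k+9) ∧
        ¬ IsPerfectSquare (8*k*k+16*k+9)) := by
  have hkk : 3*k ≤ k*k := Nat.mul_le_mul_right k hk
  have hkc : k ≤ c := by omega
  have hK : 3 ≤ (k:ℤ) := by exact_mod_cast hk
  have hc' : 2*(c:ℤ) = (k:ℤ)^2 + (k:ℤ) := by
    have := congrArg (Nat.cast : ℕ → ℤ) hc
    push_cast at this
    linear_combination this
  have hc2K : 2*(k:ℤ) ≤ (c:ℤ) := by nlinarith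
  constructor
  · rintro ⟨hcard, hinj⟩
    refine ⟨?_, ?_, ?_⟩ <;> rintro ⟨t, ht⟩
    · -- 8k²+17 = t², collision between path vertex c-z and vertex 2c+3
      have ht' : ((t:ℤ))*t = 8*(k:ℤ)*k+17 := by exact_mod_cast congrArg (Nat.cast : ℕ → ℤ) ht.symm
      have hodd : t % 2 = 1 := by
        rcases Nat.even_or_odd t with he|ho
        · exfalso
          obtain ⟨s, hs⟩ := he
          have ht2 : 8*(k*k)+17 = t*t := by linarith
          obtain ⟨K2, hK2⟩ : ∃ m, k*k = m := ⟨_, rfl⟩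
          rw [hK2, hs, show (s+s)*(s+s) = 2*(2*s*s) from by ring] at ht2
          obtain ⟨S, hS⟩ : ∃ m, 2*s*s = m := ⟨_, rfl⟩
          rw [hS] at ht2
          omega
        · exact Nat.odd_iff.mp ho
      have ht5 : 5 ≤ t := by nlinarith
      set z := (t-3)/2 with hzdef
      have hz : 2*z+3 = t := by omega
      have hzt : 2*(z:ℤ)+3 = t := by exact_mod_cast hz
      have hzz : (z:ℤ)^2 + 3*z = 2*(k:ℤ)^2 + 2 := by nlinarith [ht', hzt]
      have hz1 : 1 ≤ z := by omega
      have hzc : (z:ℤ) ≤ c := by nlinarith [Int.natCast_nonneg z, Int.natCast_nonneg c]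
      have hzcn : z ≤ c := by exact_mod_cast hzc
      have hTR : TR c k (c-z) = TR c k (2*c+3) := by
        have e1 := TR_P_int hk hkc (p := c-z) (by omega)
        have e2 := TR_C_int (c:=c) (k:=k) hk hkc
        have hcz : ((c - z : ℕ) : ℤ) = (c:ℤ) - z := by
          push_cast [hzcn]
          ring
        rw [hcz] at e1
        rw [show (c:ℤ) - z - c = -(z:ℤ) by ring, abs_neg,
          abs_of_nonneg (Int.natCast_nonneg z),
          abs_of_nonpos (by linarith : -(z:ℤ)-(k:ℤ)+1 ≤ 0)] at e1
        have : ((TR c k (c-z) : ℕ):ℤ) = ((TR c k (2*c+3) : ℕ):ℤ) := by linarith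
        exact_mod_cast this
      have hvne : (⟨c-z, by omega⟩ : Fin (2*c+1+3)) ≠ ⟨2*c+3, by omega⟩ := by
        simp only [ne_eq, Fin.mk.injEq]
        omega
      refine hvne (hinj ?_)
      rw [transmission_eq hk hkc, transmission_eq hk hkc]
      simpa using hTR
    · -- 8k²+8k+9 = t², collision between path vertex c+x and vertex 2c+3
      have ht' : ((t:ℤ))*t = 8*(k:ℤ)*k+8*k+9 := by
        exact_mod_cast congrArg (Nat.cast : ℕ → ℤ) ht.symm
      have hodd : t % 2 = 1 := by
        rcases Nat.even_or_odd t with he|ho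
        · exfalso
          obtain ⟨s, hs⟩ := he
          have ht2 : 8*(k*k)+8*k+9 = t*t := by linarith
          obtain ⟨K2, hK2⟩ : ∃ m, k*k = m := ⟨_, rfl⟩
          rw [hK2, hs, show (s+s)*(s+s) = 2*(2*s*s) from by ring] at ht2
          obtain ⟨S, hS⟩ : ∃ m, 2*s*s = m := ⟨_, rfl⟩
          rw [hS] at ht2
          omega
        · exact Nat.odd_iff.mp ho
      have ht5 : 3 ≤ t := by nlinarith
      set x := (t-3)/2 with hxdef
      have hx : 2*x+3 = t := by omega
      have hxt : 2*(x:ℤ)+3 = t := by exact_mod_cast hx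
      have hxx : (x:ℤ)^2 + 3*x = 2*(k:ℤ)^2 + 2*k := by nlinarith [ht', hxt]
      have hxk : (k:ℤ) - 1 ≤ x := by
        by_contra hcon
        push_neg at hcon
        nlinarith [Int.natCast_nonneg x]
      have hxc : (x:ℤ) ≤ c := by nlinarith [Int.natCast_nonneg x, Int.natCast_nonneg c]
      have hxcn : x ≤ c := by exact_mod_cast hxc
      have hTR : TR c k (c+x) = TR c k (2*c+3) := by
        have e1 := TR_P_int hk hkc (p := c+x) (by omega)
        have e2 := TR_C_int (c:=c) (k:=k) hk hkc
        have hcx : ((c + x : ℕ) : ℤ) = (c:ℤ) + x := by push_cast; ring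
        rw [hcx] at e1
        rw [show (c:ℤ) + x - c = (x:ℤ) by ring,
          abs_of_nonneg (Int.natCast_nonneg x),
          abs_of_nonneg (by linarith : (0:ℤ) ≤ (x:ℤ)-(k:ℤ)+1)] at e1
        have : ((TR c k (c+x) : ℕ):ℤ) = ((TR c k (2*c+3) : ℕ):ℤ) := by linarith
        exact_mod_cast this
      have hvne : (⟨c+x, by omega⟩ : Fin (2*c+1+3)) ≠ ⟨2*c+3, by omega⟩ := by
        simp only [ne_eq, Fin.mk.injEq]
        omega
      refine hvne (hinj ?_)
      rw [transmission_eq hk hkc, transmission_eq hk hkc]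
      simpa using hTR
    · -- 8k²+16k+9 = t², collision between path vertex c+x and vertex 2c+2
      have ht' : ((t:ℤ))*t = 8*(k:ℤ)*k+16*k+9 := by
        exact_mod_cast congrArg (Nat.cast : ℕ → ℤ) ht.symm
      have hodd : t % 2 = 1 := by
        rcases Nat.even_or_odd t with he|ho
        · exfalso
          obtain ⟨s, hs⟩ := he
          have ht2 : 8*(k*k)+16*k+9 = t*t := by linarith
          obtain ⟨K2, hK2⟩ : ∃ m, k*k = m := ⟨_, rfl⟩
          rw [hK2, hs, show (s+s)*(s+s) = 2*(2*s*s) from by ring] at ht2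
          obtain ⟨S, hS⟩ : ∃ m, 2*s*s = m := ⟨_, rfl⟩
          rw [hS] at ht2
          omega
        · exact Nat.odd_iff.mp ho
      have ht5 : 3 ≤ t := by nlinarith
      set x := (t-3)/2 with hxdef
      have hx : 2*x+3 = t := by omega
      have hxt : 2*(x:ℤ)+3 = t := by exact_mod_cast hx
      have hxx : (x:ℤ)^2 + 3*x = 2*(k:ℤ)^2 + 4*k := by nlinarith [ht', hxt]
      have hxk : (k:ℤ) - 1 ≤ x := by
        by_contra hcon
        push_neg at hcon
        nlinarith [Int.natCast_nonneg x]
      have hxc : (x:ℤ) ≤ c := by nlinarith [Int.natCast_nonneg x, Int.natCast_nonneg c]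
      have hxcn : x ≤ c := by exact_mod_cast hxc
      have hTR : TR c k (c+x) = TR c k (2*c+2) := by
        have e1 := TR_P_int hk hkc (p := c+x) (by omega)
        have e2 := TR_B_int (c:=c) (k:=k) hk hkc
        have hcx : ((c + x : ℕ) : ℤ) = (c:ℤ) + x := by push_cast; ring
        rw [hcx] at e1
        rw [show (c:ℤ) + x - c = (x:ℤ) by ring,
          abs_of_nonneg (Int.natCast_nonneg x),
          abs_of_nonneg (by linarith : (0:ℤ) ≤ (x:ℤ)-(k:ℤ)+1)] at e1
        have : ((TR c k (c+x) : ℕ):ℤ) = ((TR c k (2*c+2) : ℕ):ℤ) := by linarith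
        exact_mod_cast this
      have hvne : (⟨c+x, by omega⟩ : Fin (2*c+1+3)) ≠ ⟨2*c+2, by omega⟩ := by
        simp only [ne_eq, Fin.mk.injEq]
        omega
      refine hvne (hinj ?_)
      rw [transmission_eq hk hkc, transmission_eq hk hkc]
      simpa using hTR
  · rintro ⟨hs1, hs2, hs3⟩
    constructor
    · simp only [Fintype.card_fin]
      omega
    · intro u v huv
      rw [transmission_eq hk hkc u, transmission_eq hk hkc v] at huv
      exact Fin.ext (TR_inj hk hc hs1 hs2 hs3 (by omega) (by omega) huv)

/-- for even `n ≥ 14` with `4n - 15` a perfect square and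
`k = (√(4n-15) - 1)/2`, the variant caterpillar `C_{n-3}(n/2 - 1, 2; n/2 + k - 2, 1)`
is transmission irregular iff none of `8k² + 17`, `8k² + 8k + 9`, `8k² + 16k + 9` is a
perfect square. -/
theorem varCaterpillar_TI_iff (n : ℕ) (heven : Even n) (hn : 14 ≤ n)
    (hsq : IsPerfectSquare (4 * n - 15)) (k : ℕ)
    (hk : k = (Nat.sqrt (4 * n - 15) - 1) / 2) :
    TransIrregular (varCaterpillar (n - 3) (n / 2 - 1) (n / 2 + k - 2)) ↔
      (¬ IsPerfectSquare (8 * k * k + 17) ∧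
        ¬ IsPerfectSquare (8 * k * k + 8 * k + 9) ∧
        ¬ IsPerfectSquare (8 * k * k + 16 * k + 9)) := by
  obtain ⟨t, ht⟩ := hsq
  have ht2 : Nat.sqrt (4 * n - 15) = t := by rw [ht, Nat.sqrt_eq]
  have htodd : t % 2 = 1 := by
    rcases Nat.even_or_odd t with he|ho
    · exfalso
      obtain ⟨s, hs⟩ := he
      rw [hs, show (s+s)*(s+s) = 2*(2*s*s) from by ring] at ht
      obtain ⟨S, hS⟩ : ∃ m, 2*s*s = m := ⟨_, rfl⟩
      rw [hS] at ht
      omega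
    · exact Nat.odd_iff.mp ho
  have hkt : k = (t-1)/2 := by rw [hk, ht2]
  have htk : t = 2*k+1 := by omega
  have hn4 : 4*n - 15 = 4*(k*k)+4*k+1 := by rw [ht, htk]; ring
  obtain ⟨K2, hK2⟩ : ∃ m, m = k*k := ⟨_, rfl⟩
  rw [← hK2] at hn4
  have hnk : n = K2+k+4 := by omega
  have hk3 : 3 ≤ k := by
    by_contra hcon
    push_neg at hcon
    have : k*k ≤ 2*2 := Nat.mul_le_mul (by omega) (by omega)
    omega
  obtain ⟨c, hc2⟩ := Nat.even_mul_succ_self k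
  have hc : 2*c = k*k + k := by
    have : k*(k+1) = k*k+k := by ring
    omega
  rw [← hK2] at hc
  have e1 : n - 3 = 2*c+1 := by omega
  have e2 : n/2 - 1 = c+1 := by omega
  have e3 : n/2 + k - 2 = c+k := by omega
  rw [e1, e2, e3]
  exact main_iff c k hk3 (by omega)
end

section
/- For any even integer n ≥ 14 such that neither 4n − 15 nor 4n − 7 is a perfect square and 8n − 23 is a perfect square, the variant caterpillar C_{n−3}(n/2 − 1, 2; n/2 + (√(8n−23) − 1)/2 − 2, 1) is transmission irregular. -/
open SimpleGraph

variable {V : Type*}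

set_option linter.unusedSectionVars false
set_option linter.unusedVariables false

namespace VC
def nd (u v : ℕ) : ℕ := (u - v) + (v - u)
def pr (m aa bb x : ℕ) : ℕ := if x < m then x else if x = m + 2 then bb else aa
def ec (m x : ℕ) : ℕ := if x < m then 0 else if x = m + 1 then 2 else 1
def Df (m aa bb x y : ℕ) : ℕ :=
  if x = y then 0
  else if (x = m ∧ y = m + 1) ∨ (x = m + 1 ∧ y = m) then 1
  else nd (pr m aa bb x) (pr m aa bb y) + ec m x + ec m y
def Rel (m aa bb x y : ℕ) : Prop :=
  (y = x + 1 ∧ y < m) ∨ (x = aa ∧ y = m) ∨ (x = m ∧ y = m + 1) ∨ (x = bb ∧ y = m + 2)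

variable {m aa bb : ℕ} (ham : aa + 1 < m) (hbm : bb + 1 < m)

lemma Df_self (x : ℕ) : Df m aa bb x x = 0 := by simp [Df]

include ham hbm in
lemma Df_eq_zero {x y : ℕ} (hx : x < m + 3) (hy : y < m + 3) (h : Df m aa bb x y = 0) :
    x = y := by
  unfold Df pr ec nd at h
  split_ifs at h <;> omega

include ham in
lemma Df_path {x y : ℕ} (hy : y < m) : Df m aa bb x y = nd (pr m aa bb x) y + ec m x := by
  unfold Df pr ec nd
  split_ifs <;> omega

include ham in
lemma Df_m (x : ℕ) : Df m aa bb x m =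
    if x = m then 0 else if x = m + 1 then 1 else nd (pr m aa bb x) aa + ec m x + 1 := by
  unfold Df pr ec nd
  split_ifs <;> omega

include ham in
lemma Df_m1 (x : ℕ) : Df m aa bb x (m+1) =
    if x = m + 1 then 0 else if x = m then 1 else nd (pr m aa bb x) aa + ec m x + 2 := by
  unfold Df pr ec nd
  split_ifs <;> omega

include ham hbm in
lemma Df_m2 (x : ℕ) : Df m aa bb x (m+2) =
    if x = m + 2 then 0 else nd (pr m aa bb x) bb + ec m x + 1 := by
  unfold Df pr ec nd
  split_ifs <;> omega

include ham hbm in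
lemma Df_lip {x x' y : ℕ} (hy : y < m + 3)
    (hrel : Rel m aa bb x x' ∨ Rel m aa bb x' x) :
    Df m aa bb x y ≤ Df m aa bb x' y + 1 := by
  unfold Rel at hrel
  have hy4 : y < m ∨ m = y ∨ m + 1 = y ∨ m + 2 = y := by omega
  rcases hy4 with hy' | rfl | rfl | rfl
  · rw [Df_path ham hy', Df_path ham hy']
    unfold pr ec nd; split_ifs <;> omega
  · rw [Df_m ham, Df_m ham]
    unfold pr ec nd; split_ifs <;> omega
  · rw [Df_m1 ham, Df_m1 ham]
    unfold pr ec nd; split_ifs <;> omega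
  · rw [Df_m2 ham hbm, Df_m2 ham hbm]
    unfold pr ec nd; split_ifs <;> omega

include ham hbm in
lemma step {x y : ℕ} (hx : x < m + 3) (hy : y < m + 3) (hxy : x ≠ y) :
    ∃ z, z < m + 3 ∧ (Rel m aa bb z y ∨ Rel m aa bb y z) ∧
      Df m aa bb x z + 1 = Df m aa bb x y := by
  have hy4 : y < m ∨ m = y ∨ m + 1 = y ∨ m + 2 = y := by omega
  rcases hy4 with hy' | rfl | rfl | rfl
  · -- y on the path
    rcases Nat.lt_trichotomy (pr m aa bb x) y with hc | hc | hc
    · refine ⟨y - 1, by omega, by unfold Rel pr at *; split_ifs at * <;> omega, ?_⟩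
      rw [Df_path ham hy', Df_path ham (by omega)]
      unfold pr ec nd at *; split_ifs at * <;> omega
    · -- pr x = y with x ≠ y: x is an attached vertex
      have hxm : x = m ∨ x = m + 1 ∨ x = m + 2 := by
        unfold pr at hc; split_ifs at hc <;> omega
      rcases hxm with h | h | h
      · exact ⟨m, by omega, by unfold Rel pr at *; split_ifs at * <;> omega,
          by rw [h, Df_self, Df_path ham hy']; unfold pr ec nd at *; split_ifs at * <;> omega⟩
      · refine ⟨m, by omega, by unfold Rel pr at *; split_ifs at * <;> omega, ?_⟩
        rw [h, Df_m ham, Df_path ham hy']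
        unfold pr ec nd at *; split_ifs at * <;> omega
      · exact ⟨m + 2, by omega, by unfold Rel pr at *; split_ifs at * <;> omega,
          by rw [h, Df_self, Df_path ham hy']; unfold pr ec nd at *; split_ifs at * <;> omega⟩
    · refine ⟨y + 1, by omega, ?_, ?_⟩
      · have : pr m aa bb x < m := by unfold pr; split_ifs <;> omega
        unfold Rel; omega
      · rw [Df_path ham hy', Df_path ham (by unfold pr at hc; split_ifs at hc <;> omega)]
        unfold pr ec nd at *; split_ifs at * <;> omega
  · -- y = m
    by_cases hx1 : x = m + 1
    · exact ⟨m + 1, by omega, by unfold Rel; omega,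
        by rw [hx1, Df_self, Df_m ham]; split_ifs <;> omega⟩
    · refine ⟨aa, by omega, by unfold Rel; omega, ?_⟩
      rw [Df_path ham (by omega), Df_m ham]
      unfold pr ec nd at *; split_ifs at * <;> omega
  · -- y = m + 1
    refine ⟨m, by omega, by unfold Rel; omega, ?_⟩
    rw [Df_m ham, Df_m1 ham]
    unfold pr ec nd at *; split_ifs at * <;> omega
  · -- y = m + 2
    refine ⟨bb, by omega, by unfold Rel; omega, ?_⟩
    rw [Df_path ham (by omega), Df_m2 ham hbm]
    unfold pr ec nd at *; split_ifs at * <;> omega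

end VC

namespace VC
variable {m aa bb : ℕ} (ham : aa + 1 < m) (hbm : bb + 1 < m)

lemma adj_iff (x y : Fin (m + 3)) :
    (varCaterpillar m (aa + 1) (bb + 1)).Adj x y ↔
      x.val ≠ y.val ∧ (Rel m aa bb x.val y.val ∨ Rel m aa bb y.val x.val) := by
  unfold varCaterpillar Rel
  rw [SimpleGraph.fromRel_adj]
  simp [Fin.ext_iff, Nat.add_sub_cancel]

end VC

namespace VC
variable {m aa bb : ℕ} (ham : aa + 1 < m) (hbm : bb + 1 < m)

include ham hbm in
lemma dist_le_Df : ∀ (k : ℕ) (x y : Fin (m + 3)), Df m aa bb x.val y.val ≤ k →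
    (varCaterpillar m (aa + 1) (bb + 1)).Reachable x y ∧
      (varCaterpillar m (aa + 1) (bb + 1)).dist x y ≤ Df m aa bb x.val y.val := by
  intro k
  induction k with
  | zero =>
    intro x y h
    have : x = y := by
      have := Df_eq_zero ham hbm x.isLt y.isLt (by omega)
      exact Fin.ext this
    subst this
    exact ⟨SimpleGraph.Reachable.refl x, by simp [Df_self]⟩
  | succ k ih =>
    intro x y h
    by_cases hxy : x = y
    · subst hxy; exact ⟨SimpleGraph.Reachable.refl x, by simp [Df_self]⟩
    · obtain ⟨z, hz3, hrel, hstep⟩ := step ham hbm x.isLt y.isLt (fun hc => hxy (Fin.ext hc))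
      have hzx : Df m aa bb x.val z ≤ k := by omega
      set zf : Fin (m + 3) := ⟨z, hz3⟩ with hzf
      have hadj : (varCaterpillar m (aa + 1) (bb + 1)).Adj zf y := by
        rw [adj_iff]
        refine ⟨?_, hrel⟩
        intro hc
        have hc' : z = y.val := hc
        rw [hc'] at hstep
        omega
      obtain ⟨hreach, hd⟩ := ih x zf hzx
      have hv : Df m aa bb x.val zf.val = Df m aa bb x.val z := rfl
      rw [hv] at hd
      refine ⟨hreach.trans hadj.reachable, ?_⟩
      obtain ⟨p, hp⟩ := hreach.exists_walk_length_eq_dist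
      have := SimpleGraph.dist_le (p.concat hadj)
      rw [SimpleGraph.Walk.length_concat, hp] at this
      omega

include ham hbm in
lemma Df_le_walk {x y : Fin (m + 3)} (p : (varCaterpillar m (aa + 1) (bb + 1)).Walk x y) :
    Df m aa bb x.val y.val ≤ p.length := by
  induction p with
  | nil => simp [Df_self]
  | cons hadj p ih =>
    rename_i u v w
    rw [adj_iff] at hadj
    have := Df_lip (m := m) (aa := aa) (bb := bb) ham hbm (x := u.val) (x' := v.val)
      (y := w.val) w.isLt hadj.2
    simpa [SimpleGraph.Walk.length_cons] using le_trans this (by omega)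

include ham hbm in
lemma dist_eq_Df (x y : Fin (m + 3)) :
    (varCaterpillar m (aa + 1) (bb + 1)).dist x y = Df m aa bb x.val y.val := by
  obtain ⟨hreach, hle⟩ := dist_le_Df ham hbm (Df m aa bb x.val y.val) x y le_rfl
  refine le_antisymm hle ?_
  obtain ⟨p, hp⟩ := hreach.exists_walk_length_eq_dist
  calc Df m aa bb x.val y.val ≤ p.length := Df_le_walk ham hbm p
  _ = _ := hp

end VC

namespace VC
variable {m aa bb : ℕ} (ham : aa + 1 < m) (hbm : bb + 1 < m)

lemma sum_nd_self (x : ℕ) : 2 * ∑ j ∈ Finset.range x, nd x j = x * (x + 1) := by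
  induction x with
  | zero => simp
  | succ x ih =>
    rw [Finset.sum_range_succ]
    have h1 : ∑ j ∈ Finset.range x, nd (x + 1) j = ∑ j ∈ Finset.range x, (nd x j + 1) :=
      Finset.sum_congr rfl fun j hj => by
        rw [Finset.mem_range] at hj; unfold nd; omega
    have h2 : nd (x + 1) x = 1 := by unfold nd; omega
    rw [h1, Finset.sum_add_distrib, Finset.sum_const, Finset.card_range, smul_eq_mul,
      mul_one, h2]
    nlinarith [ih]

lemma sum_nd {x m' : ℕ} (h : x ≤ m') :
    2 * ∑ j ∈ Finset.range m', nd x j = x * (x + 1) + (m' - 1 - x) * (m' - x) := by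
  induction m', h using Nat.le_induction with
  | base => simpa using sum_nd_self x
  | succ m' hm ih =>
    rw [Finset.sum_range_succ, Nat.mul_add, ih]
    have hnd : nd x m' = m' - x := by unfold nd; omega
    rw [hnd]
    obtain ⟨k, rfl⟩ := Nat.exists_eq_add_of_le hm
    have e1 : x + k - 1 - x = k - 1 := by omega
    have e2 : x + k - x = k := by omega
    have e3 : x + k + 1 - 1 - x = k := by omega
    have e4 : x + k + 1 - x = k + 1 := by omega
    rw [e1, e2, e3, e4]
    cases k with
    | zero => simp
    | succ k => simp only [Nat.succ_sub_one]; ring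

end VC

namespace VC
variable {m aa bb : ℕ} (ham : aa + 1 < m) (hbm : bb + 1 < m)

include ham hbm in
lemma trans_eq (v : Fin (m + 3)) :
    transmission (varCaterpillar m (aa + 1) (bb + 1)) v =
      ∑ j ∈ Finset.range (m + 3), Df m aa bb v.val j := by
  unfold transmission
  rw [← Fin.sum_univ_eq_sum_range (fun j => Df m aa bb v.val j) (m + 3)]
  exact Finset.sum_congr rfl fun u _ => dist_eq_Df ham hbm v u

include ham hbm in
lemma trans_split (v : Fin (m + 3)) :
    transmission (varCaterpillar m (aa + 1) (bb + 1)) v =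
      (∑ j ∈ Finset.range m, Df m aa bb v.val j) + Df m aa bb v.val m
        + Df m aa bb v.val (m + 1) + Df m aa bb v.val (m + 2) := by
  rw [trans_eq ham hbm, Finset.sum_range_succ, Finset.sum_range_succ, Finset.sum_range_succ]

include ham hbm in
lemma tr2_path {x : ℕ} (hx : x < m) :
    2 * transmission (varCaterpillar m (aa + 1) (bb + 1)) ⟨x, by omega⟩ =
      x * (x + 1) + (m - 1 - x) * (m - x) + 4 * nd x aa + 2 * nd x bb + 8 := by
  rw [trans_split ham hbm]
  have hsum : ∑ j ∈ Finset.range m, Df m aa bb x j = ∑ j ∈ Finset.range m, nd x j := by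
    refine Finset.sum_congr rfl fun j hj => ?_
    rw [Finset.mem_range] at hj
    rw [Df_path ham hj]
    unfold pr ec nd; split_ifs <;> omega
  have h1 : Df m aa bb x m = nd x aa + 1 := by
    rw [Df_m ham]; unfold pr ec nd; split_ifs <;> omega
  have h2 : Df m aa bb x (m + 1) = nd x aa + 2 := by
    rw [Df_m1 ham]; unfold pr ec nd; split_ifs <;> omega
  have h3 : Df m aa bb x (m + 2) = nd x bb + 1 := by
    rw [Df_m2 ham hbm]; unfold pr ec nd; split_ifs <;> omega
  have hS := sum_nd (le_of_lt hx) (x := x) (m' := m)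
  simp only [hsum, h1, h2, h3]
  set S := ∑ j ∈ Finset.range m, nd x j
  set P := (m - 1 - x) * (m - x)
  set Q := x * (x + 1)
  omega

include ham hbm in
lemma sum_base {c : ℕ} (hc : c < m) :
    ∑ j ∈ Finset.range m, Df m aa bb c j = ∑ j ∈ Finset.range m, nd c j := by
  refine Finset.sum_congr rfl fun j hj => ?_
  rw [Finset.mem_range] at hj
  rw [Df_path ham hj]
  unfold pr ec nd; split_ifs <;> omega

include ham hbm in
lemma sum_att {c : ℕ} (hc : c < m) (x : ℕ) (hx : m ≤ x) (hx3 : x < m + 3)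
    (hpr : pr m aa bb x = c) :
    ∑ j ∈ Finset.range m, Df m aa bb x j =
      (∑ j ∈ Finset.range m, nd c j) + m * ec m x := by
  have : ∑ j ∈ Finset.range m, Df m aa bb x j = ∑ j ∈ Finset.range m, (nd c j + ec m x) := by
    refine Finset.sum_congr rfl fun j hj => ?_
    rw [Finset.mem_range] at hj
    rw [Df_path ham hj, hpr]
  rw [this, Finset.sum_add_distrib, Finset.sum_const, Finset.card_range, smul_eq_mul]

include ham hbm in
lemma tr2_m :
    2 * transmission (varCaterpillar m (aa + 1) (bb + 1)) ⟨m, by omega⟩ =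
      aa * (aa + 1) + (m - 1 - aa) * (m - aa) + 2 * m + 2 * nd aa bb + 6 := by
  rw [trans_split ham hbm]
  have hpr : pr m aa bb m = aa := by unfold pr; split_ifs <;> omega
  have hec : ec m m = 1 := by unfold ec; split_ifs <;> omega
  have hsum := sum_att ham hbm (c := aa) (by omega) m le_rfl (by omega) hpr
  rw [hec, mul_one] at hsum
  have h1 : Df m aa bb m m = 0 := Df_self m
  have h2 : Df m aa bb m (m + 1) = 1 := by
    rw [Df_m1 ham]; split_ifs <;> omega
  have h3 : Df m aa bb m (m + 2) = nd aa bb + 2 := by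
    rw [Df_m2 ham hbm, hpr]; unfold ec; split_ifs <;> omega
  have hS := sum_nd (le_of_lt (by omega : aa < m)) (x := aa) (m' := m)
  simp only [hsum, h1, h2, h3]
  set S := ∑ j ∈ Finset.range m, nd aa j
  set P := (m - 1 - aa) * (m - aa)
  set Q := aa * (aa + 1)
  omega

include ham hbm in
lemma tr2_m1 :
    2 * transmission (varCaterpillar m (aa + 1) (bb + 1)) ⟨m + 1, by omega⟩ =
      aa * (aa + 1) + (m - 1 - aa) * (m - aa) + 4 * m + 2 * nd aa bb + 8 := by
  rw [trans_split ham hbm]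
  have hpr : pr m aa bb (m + 1) = aa := by unfold pr; split_ifs <;> omega
  have hec : ec m (m + 1) = 2 := by unfold ec; split_ifs <;> omega
  have hsum := sum_att ham hbm (c := aa) (by omega) (m + 1) (by omega) (by omega) hpr
  rw [hec] at hsum
  have h1 : Df m aa bb (m + 1) m = 1 := by
    rw [Df_m ham]; split_ifs <;> omega
  have h2 : Df m aa bb (m + 1) (m + 1) = 0 := Df_self (m + 1)
  have h3 : Df m aa bb (m + 1) (m + 2) = nd aa bb + 3 := by
    rw [Df_m2 ham hbm, hpr]; unfold ec; split_ifs <;> omega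
  have hS := sum_nd (le_of_lt (by omega : aa < m)) (x := aa) (m' := m)
  simp only [hsum, h1, h2, h3]
  set S := ∑ j ∈ Finset.range m, nd aa j
  set P := (m - 1 - aa) * (m - aa)
  set Q := aa * (aa + 1)
  omega

include ham hbm in
lemma tr2_m2 :
    2 * transmission (varCaterpillar m (aa + 1) (bb + 1)) ⟨m + 2, by omega⟩ =
      bb * (bb + 1) + (m - 1 - bb) * (m - bb) + 2 * m + 4 * nd aa bb + 10 := by
  rw [trans_split ham hbm]
  have hpr : pr m aa bb (m + 2) = bb := by unfold pr; split_ifs <;> omega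
  have hec : ec m (m + 2) = 1 := by unfold ec; split_ifs <;> omega
  have hsum := sum_att ham hbm (c := bb) (by omega) (m + 2) (by omega) (by omega) hpr
  rw [hec, mul_one] at hsum
  have h1 : Df m aa bb (m + 2) m = nd bb aa + 2 := by
    rw [Df_m ham, hpr]; unfold ec; split_ifs <;> omega
  have h2 : Df m aa bb (m + 2) (m + 1) = nd bb aa + 3 := by
    rw [Df_m1 ham, hpr]; unfold ec; split_ifs <;> omega
  have h3 : Df m aa bb (m + 2) (m + 2) = 0 := Df_self (m + 2)
  have h4 : nd bb aa = nd aa bb := by unfold nd; omega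
  have hS := sum_nd (le_of_lt (by omega : bb < m)) (x := bb) (m' := m)
  simp only [hsum, h1, h2, h3, h4]
  set S := ∑ j ∈ Finset.range m, nd bb j
  set P := (m - 1 - bb) * (m - bb)
  set Q := bb * (bb + 1)
  omega

end VC

namespace VC

/-- 4 × transmission, closed form -/
def Tv (c s x : ℕ) : ℕ :=
  if x ≤ c then (2*c+3-2*x) * (2*c+3-2*x) + (4*(c*c)+4*c+4*s+3)
  else if x ≤ c+s-1 then (2*x+1-2*c) * (2*x+1-2*c) + (4*(c*c)+4*c+4*s+11)
  else if x ≤ 2*c then (2*x+3-2*c) * (2*x+3-2*c) + (4*(c*c)+4*c+11-4*s)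
  else if x = 2*c+1 then 4*(c*c)+12*c+4*s+12
  else if x = 2*c+2 then 4*(c*c)+4*c+4*(s*s)+8*s+12
  else 4*(c*c)+28*c-4*s+28

variable {c s : ℕ} (hs : 5 ≤ s) (hsc : s + 2 ≤ c) (hss : s * s + s = 4 * c + 2)

include hs hsc hss in
lemma key4 {x : ℕ} (hx : x < 2*c+1+3) :
    4 * transmission (varCaterpillar (2*c+1) (c+1) ((c+s-1)+1)) ⟨x, hx⟩ = Tv c s x := by
  have ham : c + 1 < 2*c+1 := by omega
  have hbm : (c+s-1) + 1 < 2*c+1 := by omega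
  have hssZ : (s:ℤ) * s + s = 4*c+2 := by exact_mod_cast hss
  unfold Tv
  rcases (by omega : x ≤ c ∨ (c < x ∧ x ≤ c+s-1) ∨ (c+s-1 < x ∧ x ≤ 2*c) ∨ x = 2*c+1 ∨
      x = 2*c+2 ∨ x = 2*c+3) with h | ⟨h, h'⟩ | ⟨h, h'⟩ | h | h | h
  · rw [if_pos h]
    have hT := tr2_path (m := 2*c+1) (aa := c) (bb := c+s-1) ham hbm
      (show x < 2*c+1 by omega)
    have e2 : nd x c = c - x := by unfold nd; omega
    have e3 : nd x (c+s-1) = (c - x) + (s - 1) := by unfold nd; omega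
    rw [e2, e3] at hT
    zify [show (1:ℕ) ≤ s by omega, show x ≤ c by omega, show 2*x ≤ 2*c+3 by omega,
      show x ≤ 2*c+1-1 by omega, show x ≤ 2*c+1 by omega,
      show (1:ℕ) ≤ 2*c+1 by omega] at hT ⊢
    linear_combination (2:ℤ) * hT
  · rw [if_neg (by omega), if_pos h']
    have hT := tr2_path (m := 2*c+1) (aa := c) (bb := c+s-1) ham hbm
      (show x < 2*c+1 by omega)
    have e2 : nd x c = x - c := by unfold nd; omega
    have e3 : nd x (c+s-1) = (c+s-1) - x := by unfold nd; omega
    rw [e2, e3] at hT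
    zify [show (1:ℕ) ≤ c+s by omega, show x ≤ c+s-1 by omega, show c ≤ x by omega,
      show 2*c ≤ 2*x+1 by omega, show x ≤ 2*c+1-1 by omega, show x ≤ 2*c+1 by omega,
      show (1:ℕ) ≤ 2*c+1 by omega] at hT ⊢
    linear_combination (2:ℤ) * hT
  · rw [if_neg (by omega), if_neg (by omega), if_pos h']
    have hT := tr2_path (m := 2*c+1) (aa := c) (bb := c+s-1) ham hbm
      (show x < 2*c+1 by omega)
    have e2 : nd x c = x - c := by unfold nd; omega
    have e3 : nd x (c+s-1) = x - (c+s-1) := by unfold nd; omega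
    rw [e2, e3] at hT
    zify [show (1:ℕ) ≤ c+s by omega, show c+s-1 ≤ x by omega, show c ≤ x by omega,
      show 2*c ≤ 2*x+3 by omega, show x ≤ 2*c+1-1 by omega, show x ≤ 2*c+1 by omega,
      show (4:ℕ)*s ≤ 4*(c*c)+4*c+11 by nlinarith,
      show (1:ℕ) ≤ 2*c+1 by omega] at hT ⊢
    linear_combination (2:ℤ) * hT
  · rw [if_neg (by omega), if_neg (by omega), if_neg (by omega), if_pos h]
    have hfin : (⟨x, hx⟩ : Fin (2*c+1+3)) = ⟨2*c+1, by omega⟩ := by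
      simp only [Fin.ext_iff]; omega
    rw [hfin]
    have hT := tr2_m (m := 2*c+1) (aa := c) (bb := c+s-1) ham hbm
    have e3 : nd c (c+s-1) = s - 1 := by unfold nd; omega
    rw [e3] at hT
    zify [show (1:ℕ) ≤ s by omega, show c ≤ 2*c+1-1 by omega, show c ≤ 2*c+1 by omega,
      show (1:ℕ) ≤ 2*c+1 by omega] at hT ⊢
    linear_combination (2:ℤ) * hT
  · rw [if_neg (by omega), if_neg (by omega), if_neg (by omega), if_neg (by omega), if_pos h]
    have hfin : (⟨x, hx⟩ : Fin (2*c+1+3)) = ⟨(2*c+1)+1, by omega⟩ := by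
      simp only [Fin.ext_iff]; omega
    rw [hfin]
    have hT := tr2_m1 (m := 2*c+1) (aa := c) (bb := c+s-1) ham hbm
    have e3 : nd c (c+s-1) = s - 1 := by unfold nd; omega
    rw [e3] at hT
    zify [show (1:ℕ) ≤ s by omega, show c ≤ 2*c+1-1 by omega, show c ≤ 2*c+1 by omega,
      show (1:ℕ) ≤ 2*c+1 by omega] at hT ⊢
    linear_combination (2:ℤ) * hT - (4:ℤ) * hssZ
  · rw [if_neg (by omega), if_neg (by omega), if_neg (by omega), if_neg (by omega),
      if_neg (by omega)]
    have hfin : (⟨x, hx⟩ : Fin (2*c+1+3)) = ⟨(2*c+1)+2, by omega⟩ := by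
      simp only [Fin.ext_iff]; omega
    rw [hfin]
    have hT := tr2_m2 (m := 2*c+1) (aa := c) (bb := c+s-1) ham hbm
    have e3 : nd c (c+s-1) = s - 1 := by unfold nd; omega
    rw [e3] at hT
    zify [show (1:ℕ) ≤ s by omega, show (1:ℕ) ≤ c+s by omega,
      show c+s-1 ≤ 2*c+1-1 by omega, show c+s-1 ≤ 2*c+1 by omega,
      show (1:ℕ) ≤ 2*c+1 by omega,
      show (4:ℕ)*s ≤ 4*(c*c)+28*c by nlinarith] at hT ⊢
    linear_combination (2:ℤ) * hT + (4:ℤ) * hssZ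

end VC

namespace VC

lemma sq_mod6_ne5 (a k : ℕ) : a * a ≠ 6 * k + 5 := by
  intro h
  obtain ⟨w, hw⟩ : ∃ w, w = a * a := ⟨_, rfl⟩
  have h6 : w % 6 = (a % 6) * (a % 6) % 6 := by rw [hw]; exact Nat.mul_mod a a 6
  rw [← hw] at h
  have hlt : a % 6 < 6 := Nat.mod_lt _ (by norm_num)
  interval_cases h7 : (a % 6) <;> omega

/-- `u² = 6s² - 2s + 13` is impossible (via mod 7). -/
lemma no7 {u s : ℕ} (hs : 1 ≤ s) (h : u * u + 2 * s = 6 * (s * s) + 13) : False := by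
  have h7 : ((u : ZMod 7)) * u + 2 * s = 6 * (s * s) + 13 := by
    have := congrArg (Nat.cast : ℕ → ZMod 7) h
    push_cast at this
    exact_mod_cast this
  have key : ∀ a b : ZMod 7, a * a + 2 * b = 6 * (b * b) + 13 → a = 0 ∧ b + 1 = 0 := by decide
  obtain ⟨hu0, hs0⟩ := key _ _ h7
  have hdu : (7:ℕ) ∣ u := by
    rwa [ZMod.natCast_eq_zero_iff] at hu0
  have hds : (7:ℕ) ∣ s + 1 := by
    have : ((s + 1 : ℕ) : ZMod 7) = 0 := by push_cast; rw [hs0]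
    rwa [ZMod.natCast_eq_zero_iff] at this
  obtain ⟨u1, rfl⟩ := hdu
  obtain ⟨s1, hs1⟩ := hds
  have hs1' : 1 ≤ s1 := by omega
  have hseq : s = 7 * s1 - 1 := by omega
  subst hseq
  obtain ⟨A, hA⟩ : ∃ A, A = u1 * u1 := ⟨_, rfl⟩
  obtain ⟨B, hB⟩ : ∃ B, B = s1 * s1 := ⟨_, rfl⟩
  have expand : (7*s1-1) * (7*s1-1) = 49 * B - 14 * s1 + 1 := by
    rw [hB]
    zify [show (1:ℕ) ≤ 7 * s1 by omega, show 14 * s1 ≤ 49 * (s1*s1) by nlinarith]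
    ring
  have expand2 : 7 * u1 * (7 * u1) = 49 * A := by rw [hA]; ring
  rw [expand, expand2] at h
  omega

set_option maxHeartbeats 3000000 in
lemma collide_le {c σ : ℕ} (hsc : σ + 7 ≤ c) (hss : (σ+5) * (σ+5) + (σ+5) = 4 * c + 2)
    (h1 : ¬ IsPerfectSquare (8 * c + 1)) (h2 : ¬ IsPerfectSquare (8 * c + 9))
    {U V : ℕ} (hU : U < 2*c+4) (hV : V < 2*c+4) (hUV : U ≤ V)
    (h : Tv c (σ+5) U = Tv c (σ+5) V) : U = V := by
  unfold Tv at h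
  obtain ⟨CC, hCC⟩ : ∃ CC, CC = c * c := ⟨_, rfl⟩
  obtain ⟨SS, hSS⟩ : ∃ SS, SS = (σ+5) * (σ+5) := ⟨_, rfl⟩
  rw [← hCC, ← hSS] at h
  rw [← hSS] at hss
  rcases (by omega : U ≤ c ∨ (c < U ∧ U ≤ c+(σ+5)-1) ∨ (c+(σ+5)-1 < U ∧ U ≤ 2*c) ∨
      U = 2*c+1 ∨ U = 2*c+2 ∨ U = 2*c+3) with hA | ⟨hA, hA2⟩ | ⟨hA, hA2⟩ | hA | hA | hA

  · rcases (by omega : V ≤ c ∨ (c < V ∧ V ≤ c+(σ+5)-1) ∨ (c+(σ+5)-1 < V ∧ V ≤ 2*c) ∨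
        V = 2*c+1 ∨ V = 2*c+2 ∨ V = 2*c+3) with hB | ⟨hB, hB2⟩ | ⟨hB, hB2⟩ | hB | hB | hB
    · rw [if_pos hA,
        if_pos hB] at h
      obtain ⟨P, hP⟩ : ∃ x, x = (2*c+3-2*U)*(2*c+3-2*U) := ⟨_, rfl⟩
      rw [← hP] at h
      obtain ⟨Q, hQ⟩ : ∃ x, x = (2*c+3-2*V)*(2*c+3-2*V) := ⟨_, rfl⟩
      rw [← hQ] at h
      have hPQ : P = Q := by omega
      rw [hP, hQ] at hPQ
      have := Nat.mul_self_inj.mp hPQ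
      omega
    · rw [if_pos hA,
        if_neg (show ¬ V ≤ c by omega),
        if_pos hB2] at h
      obtain ⟨P, hP⟩ : ∃ x, x = (2*c+3-2*U)*(2*c+3-2*U) := ⟨_, rfl⟩
      rw [← hP] at h
      obtain ⟨Q, hQ⟩ : ∃ x, x = (2*V+1-2*c)*(2*V+1-2*c) := ⟨_, rfl⟩
      rw [← hQ] at h
      exfalso
      have hrel : P = Q + 8 := by omega
      set p := c - U with hp
      set q := V - c - 1 with hq
      have hPp : P = (2*p+3)*(2*p+3) := by rw [hP]; congr 1 <;> omega
      have hQq : Q = (2*q+3)*(2*q+3) := by rw [hQ]; congr 1 <;> omega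
      rcases le_or_gt p q with hc | hc
      · have hb := Nat.mul_le_mul (show 2*p+3 ≤ 2*q+3 by omega) (show 2*p+3 ≤ 2*q+3 by omega)
        linarith [hPp, hQq, hrel, hb]
      · have hb := Nat.mul_le_mul (show 2*q+5 ≤ 2*p+3 by omega) (show 2*q+5 ≤ 2*p+3 by omega)
        have hid : (2*q+5)*(2*q+5) = (2*q+3)*(2*q+3) + (8*q+16) := by ring
        linarith [hPp, hQq, hrel, hb, hid]
    · rw [if_pos hA,
        if_neg (show ¬ V ≤ c by omega),
        if_neg (show ¬ V ≤ c+(σ+5)-1 by omega),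
        if_pos hB2] at h
      obtain ⟨P, hP⟩ : ∃ x, x = (2*c+3-2*U)*(2*c+3-2*U) := ⟨_, rfl⟩
      rw [← hP] at h
      obtain ⟨R, hR⟩ : ∃ x, x = (2*V+3-2*c)*(2*V+3-2*c) := ⟨_, rfl⟩
      rw [← hR] at h
      exfalso
      have hrel : P + 8*(σ+5) = R + 8 := by omega
      set p := c - U with hp
      set r := V - c with hr
      have hrs : σ + 5 ≤ r := by omega
      have hPp : P = (2*p+3)*(2*p+3) := by rw [hP]; congr 1 <;> omega
      have hRr : R = (2*r+3)*(2*r+3) := by rw [hR]; congr 1 <;> omega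
      rcases le_or_gt r p with hc | hc
      · have hb := Nat.mul_le_mul (show 2*r+3 ≤ 2*p+3 by omega) (show 2*r+3 ≤ 2*p+3 by omega)
        linarith [hPp, hRr, hrel, hb]
      · have hb := Nat.mul_le_mul (show 2*p+3 ≤ 2*r+1 by omega) (show 2*p+3 ≤ 2*r+1 by omega)
        have hid : (2*r+1)*(2*r+1) + (8*r+8) = (2*r+3)*(2*r+3) := by ring
        linarith [hPp, hRr, hrel, hb, hid]
    · rw [if_pos hA,
        if_neg (show ¬ V ≤ c by omega),
        if_neg (show ¬ V ≤ c+(σ+5)-1 by omega),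
        if_neg (show ¬ V ≤ 2*c by omega),
        if_pos hB] at h
      obtain ⟨P, hP⟩ : ∃ x, x = (2*c+3-2*U)*(2*c+3-2*U) := ⟨_, rfl⟩
      rw [← hP] at h
      exfalso
      have hrel : P = 8*c + 9 := by omega
      have hPp : P = (2*(c-U)+3)*(2*(c-U)+3) := by rw [hP]; congr 1 <;> omega
      exact h2 ⟨2*(c-U)+3, by rw [← hPp]; omega⟩
    · rw [if_pos hA,
        if_neg (show ¬ V ≤ c by omega),
        if_neg (show ¬ V ≤ c+(σ+5)-1 by omega),
        if_neg (show ¬ V ≤ 2*c by omega),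
        if_neg (show ¬ V = 2*c+1 by omega),
        if_pos hB] at h
      obtain ⟨P, hP⟩ : ∃ x, x = (2*c+3-2*U)*(2*c+3-2*U) := ⟨_, rfl⟩
      rw [← hP] at h
      exfalso
      have hrel : P = 4*SS + 4*(σ+5) + 9 := by omega
      set p := c - U with hp
      have hPp : P = (2*p+3)*(2*p+3) := by rw [hP]; congr 1 <;> omega
      have hid : (2*σ+11)*(2*σ+11) + 8 = 4*((σ+5)*(σ+5)) + 4*(σ+5) + 9 := by ring
      rcases le_or_gt p (σ+4) with hc | hc
      · have hb := Nat.mul_le_mul (show 2*p+3 ≤ 2*σ+11 by omega) (show 2*p+3 ≤ 2*σ+11 by omega)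
        linarith [hPp, hrel, hb, hid, hSS]
      · have hb := Nat.mul_le_mul (show 2*σ+13 ≤ 2*p+3 by omega) (show 2*σ+13 ≤ 2*p+3 by omega)
        have hid2 : (2*σ+13)*(2*σ+13) = (2*σ+11)*(2*σ+11) + (8*σ+48) := by ring
        linarith [hPp, hrel, hb, hid, hid2, hSS]
    · rw [if_pos hA,
        if_neg (show ¬ V ≤ c by omega),
        if_neg (show ¬ V ≤ c+(σ+5)-1 by omega),
        if_neg (show ¬ V ≤ 2*c by omega),
        if_neg (show ¬ V = 2*c+1 by omega),
        if_neg (show ¬ V = 2*c+2 by omega)] at h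
      obtain ⟨P, hP⟩ : ∃ x, x = (2*c+3-2*U)*(2*c+3-2*U) := ⟨_, rfl⟩
      rw [← hP] at h
      exfalso
      have hrel : P + 8*(σ+5) = 24*c + 25 := by omega
      have hPp : P = (2*(c-U)+3)*(2*(c-U)+3) := by rw [hP]; congr 1 <;> omega
      exact no7 (s := σ+5) (by omega) (by rw [← hPp, ← hSS]; omega)
  · rcases (by omega : V ≤ c ∨ (c < V ∧ V ≤ c+(σ+5)-1) ∨ (c+(σ+5)-1 < V ∧ V ≤ 2*c) ∨
        V = 2*c+1 ∨ V = 2*c+2 ∨ V = 2*c+3) with hB | ⟨hB, hB2⟩ | ⟨hB, hB2⟩ | hB | hB | hB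
    · omega
    · rw [if_neg (show ¬ U ≤ c by omega),
        if_pos hA2,
        if_neg (show ¬ V ≤ c by omega),
        if_pos hB2] at h
      obtain ⟨P, hP⟩ : ∃ x, x = (2*U+1-2*c)*(2*U+1-2*c) := ⟨_, rfl⟩
      rw [← hP] at h
      obtain ⟨Q, hQ⟩ : ∃ x, x = (2*V+1-2*c)*(2*V+1-2*c) := ⟨_, rfl⟩
      rw [← hQ] at h
      have hPQ : P = Q := by omega
      rw [hP, hQ] at hPQ
      have := Nat.mul_self_inj.mp hPQ
      omega
    · rw [if_neg (show ¬ U ≤ c by omega),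
        if_pos hA2,
        if_neg (show ¬ V ≤ c by omega),
        if_neg (show ¬ V ≤ c+(σ+5)-1 by omega),
        if_pos hB2] at h
      obtain ⟨Q, hQ⟩ : ∃ x, x = (2*U+1-2*c)*(2*U+1-2*c) := ⟨_, rfl⟩
      rw [← hQ] at h
      obtain ⟨R, hR⟩ : ∃ x, x = (2*V+3-2*c)*(2*V+3-2*c) := ⟨_, rfl⟩
      rw [← hR] at h
      exfalso
      have hrel : Q + 8*(σ+5) = R := by omega
      have hQq : Q = (2*(U-c-1)+3)*(2*(U-c-1)+3) := by rw [hQ]; congr 1 <;> omega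
      have hRr : R = (2*(V-c)+3)*(2*(V-c)+3) := by rw [hR]; congr 1 <;> omega
      have hb1 := Nat.mul_le_mul (show 2*(U-c-1)+3 ≤ 2*σ+9 by omega) (show 2*(U-c-1)+3 ≤ 2*σ+9 by omega)
      have hb2 := Nat.mul_le_mul (show 2*σ+13 ≤ 2*(V-c)+3 by omega) (show 2*σ+13 ≤ 2*(V-c)+3 by omega)
      have hid : (2*σ+13)*(2*σ+13) = (2*σ+9)*(2*σ+9) + (16*σ+88) := by ring
      linarith [hQq, hRr, hrel, hb1, hb2, hid]
    · rw [if_neg (show ¬ U ≤ c by omega),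
        if_pos hA2,
        if_neg (show ¬ V ≤ c by omega),
        if_neg (show ¬ V ≤ c+(σ+5)-1 by omega),
        if_neg (show ¬ V ≤ 2*c by omega),
        if_pos hB] at h
      obtain ⟨Q, hQ⟩ : ∃ x, x = (2*U+1-2*c)*(2*U+1-2*c) := ⟨_, rfl⟩
      rw [← hQ] at h
      exfalso
      have hrel : Q = 8*c + 1 := by omega
      have hQq : Q = (2*(U-c-1)+3)*(2*(U-c-1)+3) := by rw [hQ]; congr 1 <;> omega
      exact h1 ⟨2*(U-c-1)+3, by rw [← hQq]; omega⟩
    · rw [if_neg (show ¬ U ≤ c by omega),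
        if_pos hA2,
        if_neg (show ¬ V ≤ c by omega),
        if_neg (show ¬ V ≤ c+(σ+5)-1 by omega),
        if_neg (show ¬ V ≤ 2*c by omega),
        if_neg (show ¬ V = 2*c+1 by omega),
        if_pos hB] at h
      obtain ⟨Q, hQ⟩ : ∃ x, x = (2*U+1-2*c)*(2*U+1-2*c) := ⟨_, rfl⟩
      rw [← hQ] at h
      exfalso
      have hrel : Q = 4*SS + 4*(σ+5) + 1 := by omega
      have hQq : Q = (2*(U-c-1)+3)*(2*(U-c-1)+3) := by rw [hQ]; congr 1 <;> omega
      have hb := Nat.mul_le_mul (show 2*(U-c-1)+3 ≤ 2*σ+9 by omega) (show 2*(U-c-1)+3 ≤ 2*σ+9 by omega)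
      have hid : (2*σ+11)*(2*σ+11) = 4*((σ+5)*(σ+5)) + 4*(σ+5) + 1 := by ring
      have hid2 : (2*σ+11)*(2*σ+11) = (2*σ+9)*(2*σ+9) + (8*σ+40) := by ring
      linarith [hQq, hrel, hb, hid, hid2, hSS]
    · rw [if_neg (show ¬ U ≤ c by omega),
        if_pos hA2,
        if_neg (show ¬ V ≤ c by omega),
        if_neg (show ¬ V ≤ c+(σ+5)-1 by omega),
        if_neg (show ¬ V ≤ 2*c by omega),
        if_neg (show ¬ V = 2*c+1 by omega),
        if_neg (show ¬ V = 2*c+2 by omega)] at h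
      obtain ⟨Q, hQ⟩ : ∃ x, x = (2*U+1-2*c)*(2*U+1-2*c) := ⟨_, rfl⟩
      rw [← hQ] at h
      exfalso
      have hrel : Q + 8*(σ+5) = 24*c + 17 := by omega
      have hQq : Q = (2*(U-c-1)+3)*(2*(U-c-1)+3) := by rw [hQ]; congr 1 <;> omega
      have hb := Nat.mul_le_mul (show 2*(U-c-1)+3 ≤ 2*σ+9 by omega) (show 2*(U-c-1)+3 ≤ 2*σ+9 by omega)
      have hid : (2*σ+9)*(2*σ+9) + 4*(σ+5) = 4*((σ+5)*(σ+5)) + 1 := by ring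
      linarith [hQq, hrel, hb, hid, hSS, hss]
  · rcases (by omega : V ≤ c ∨ (c < V ∧ V ≤ c+(σ+5)-1) ∨ (c+(σ+5)-1 < V ∧ V ≤ 2*c) ∨
        V = 2*c+1 ∨ V = 2*c+2 ∨ V = 2*c+3) with hB | ⟨hB, hB2⟩ | ⟨hB, hB2⟩ | hB | hB | hB
    · omega
    · omega
    · rw [if_neg (show ¬ U ≤ c by omega),
        if_neg (show ¬ U ≤ c+(σ+5)-1 by omega),
        if_pos hA2,
        if_neg (show ¬ V ≤ c by omega),
        if_neg (show ¬ V ≤ c+(σ+5)-1 by omega),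
        if_pos hB2] at h
      obtain ⟨P, hP⟩ : ∃ x, x = (2*U+3-2*c)*(2*U+3-2*c) := ⟨_, rfl⟩
      rw [← hP] at h
      obtain ⟨Q, hQ⟩ : ∃ x, x = (2*V+3-2*c)*(2*V+3-2*c) := ⟨_, rfl⟩
      rw [← hQ] at h
      have hPQ : P = Q := by omega
      rw [hP, hQ] at hPQ
      have := Nat.mul_self_inj.mp hPQ
      omega
    · rw [if_neg (show ¬ U ≤ c by omega),
        if_neg (show ¬ U ≤ c+(σ+5)-1 by omega),
        if_pos hA2,
        if_neg (show ¬ V ≤ c by omega),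
        if_neg (show ¬ V ≤ c+(σ+5)-1 by omega),
        if_neg (show ¬ V ≤ 2*c by omega),
        if_pos hB] at h
      obtain ⟨R, hR⟩ : ∃ x, x = (2*U+3-2*c)*(2*U+3-2*c) := ⟨_, rfl⟩
      rw [← hR] at h
      exfalso
      have hrel : R = 8*c + 8*(σ+5) + 1 := by omega
      have hRr : R = (2*(U-c)+3)*(2*(U-c)+3) := by rw [hR]; congr 1 <;> omega
      have hb := Nat.mul_le_mul (show 2*σ+13 ≤ 2*(U-c)+3 by omega) (show 2*σ+13 ≤ 2*(U-c)+3 by omega)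
      have hid : (2*σ+13)*(2*σ+13) = 4*((σ+5)*(σ+5)) + 12*(σ+5) + 9 := by ring
      linarith [hRr, hrel, hb, hid, hSS, hss]
    · rw [if_neg (show ¬ U ≤ c by omega),
        if_neg (show ¬ U ≤ c+(σ+5)-1 by omega),
        if_pos hA2,
        if_neg (show ¬ V ≤ c by omega),
        if_neg (show ¬ V ≤ c+(σ+5)-1 by omega),
        if_neg (show ¬ V ≤ 2*c by omega),
        if_neg (show ¬ V = 2*c+1 by omega),
        if_pos hB] at h
      obtain ⟨R, hR⟩ : ∃ x, x = (2*U+3-2*c)*(2*U+3-2*c) := ⟨_, rfl⟩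
      rw [← hR] at h
      exfalso
      have hrel : R = 4*SS + 12*(σ+5) + 1 := by omega
      have hRr : R = (2*(U-c)+3)*(2*(U-c)+3) := by rw [hR]; congr 1 <;> omega
      have hb := Nat.mul_le_mul (show 2*σ+13 ≤ 2*(U-c)+3 by omega) (show 2*σ+13 ≤ 2*(U-c)+3 by omega)
      have hid : (2*σ+13)*(2*σ+13) = 4*((σ+5)*(σ+5)) + 12*(σ+5) + 9 := by ring
      linarith [hRr, hrel, hb, hid, hSS]
    · rw [if_neg (show ¬ U ≤ c by omega),
        if_neg (show ¬ U ≤ c+(σ+5)-1 by omega),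
        if_pos hA2,
        if_neg (show ¬ V ≤ c by omega),
        if_neg (show ¬ V ≤ c+(σ+5)-1 by omega),
        if_neg (show ¬ V ≤ 2*c by omega),
        if_neg (show ¬ V = 2*c+1 by omega),
        if_neg (show ¬ V = 2*c+2 by omega)] at h
      obtain ⟨R, hR⟩ : ∃ x, x = (2*U+3-2*c)*(2*U+3-2*c) := ⟨_, rfl⟩
      rw [← hR] at h
      exfalso
      have hrel : R = 24*c + 17 := by omega
      have hRr : R = (2*(U-c)+3)*(2*(U-c)+3) := by rw [hR]; congr 1 <;> omega
      exact sq_mod6_ne5 (2*(U-c)+3) (4*c+2) (by rw [← hRr]; omega)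
  · rcases (by omega : V ≤ c ∨ (c < V ∧ V ≤ c+(σ+5)-1) ∨ (c+(σ+5)-1 < V ∧ V ≤ 2*c) ∨
        V = 2*c+1 ∨ V = 2*c+2 ∨ V = 2*c+3) with hB | ⟨hB, hB2⟩ | ⟨hB, hB2⟩ | hB | hB | hB
    · omega
    · omega
    · omega
    · rw [if_neg (show ¬ U ≤ c by omega),
        if_neg (show ¬ U ≤ c+(σ+5)-1 by omega),
        if_neg (show ¬ U ≤ 2*c by omega),
        if_pos hA,
        if_neg (show ¬ V ≤ c by omega),
        if_neg (show ¬ V ≤ c+(σ+5)-1 by omega),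
        if_neg (show ¬ V ≤ 2*c by omega),
        if_pos hB] at h
      omega
    · rw [if_neg (show ¬ U ≤ c by omega),
        if_neg (show ¬ U ≤ c+(σ+5)-1 by omega),
        if_neg (show ¬ U ≤ 2*c by omega),
        if_pos hA,
        if_neg (show ¬ V ≤ c by omega),
        if_neg (show ¬ V ≤ c+(σ+5)-1 by omega),
        if_neg (show ¬ V ≤ 2*c by omega),
        if_neg (show ¬ V = 2*c+1 by omega),
        if_pos hB] at h
      omega
    · rw [if_neg (show ¬ U ≤ c by omega),
        if_neg (show ¬ U ≤ c+(σ+5)-1 by omega),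
        if_neg (show ¬ U ≤ 2*c by omega),
        if_pos hA,
        if_neg (show ¬ V ≤ c by omega),
        if_neg (show ¬ V ≤ c+(σ+5)-1 by omega),
        if_neg (show ¬ V ≤ 2*c by omega),
        if_neg (show ¬ V = 2*c+1 by omega),
        if_neg (show ¬ V = 2*c+2 by omega)] at h
      omega
  · rcases (by omega : V ≤ c ∨ (c < V ∧ V ≤ c+(σ+5)-1) ∨ (c+(σ+5)-1 < V ∧ V ≤ 2*c) ∨
        V = 2*c+1 ∨ V = 2*c+2 ∨ V = 2*c+3) with hB | ⟨hB, hB2⟩ | ⟨hB, hB2⟩ | hB | hB | hB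
    · omega
    · omega
    · omega
    · omega
    · rw [if_neg (show ¬ U ≤ c by omega),
        if_neg (show ¬ U ≤ c+(σ+5)-1 by omega),
        if_neg (show ¬ U ≤ 2*c by omega),
        if_neg (show ¬ U = 2*c+1 by omega),
        if_pos hA,
        if_neg (show ¬ V ≤ c by omega),
        if_neg (show ¬ V ≤ c+(σ+5)-1 by omega),
        if_neg (show ¬ V ≤ 2*c by omega),
        if_neg (show ¬ V = 2*c+1 by omega),
        if_pos hB] at h
      omega
    · rw [if_neg (show ¬ U ≤ c by omega),
        if_neg (show ¬ U ≤ c+(σ+5)-1 by omega),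
        if_neg (show ¬ U ≤ 2*c by omega),
        if_neg (show ¬ U = 2*c+1 by omega),
        if_pos hA,
        if_neg (show ¬ V ≤ c by omega),
        if_neg (show ¬ V ≤ c+(σ+5)-1 by omega),
        if_neg (show ¬ V ≤ 2*c by omega),
        if_neg (show ¬ V = 2*c+1 by omega),
        if_neg (show ¬ V = 2*c+2 by omega)] at h
      omega
  · rcases (by omega : V ≤ c ∨ (c < V ∧ V ≤ c+(σ+5)-1) ∨ (c+(σ+5)-1 < V ∧ V ≤ 2*c) ∨
        V = 2*c+1 ∨ V = 2*c+2 ∨ V = 2*c+3) with hB | ⟨hB, hB2⟩ | ⟨hB, hB2⟩ | hB | hB | hB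
    · omega
    · omega
    · omega
    · omega
    · omega
    · rw [if_neg (show ¬ U ≤ c by omega),
        if_neg (show ¬ U ≤ c+(σ+5)-1 by omega),
        if_neg (show ¬ U ≤ 2*c by omega),
        if_neg (show ¬ U = 2*c+1 by omega),
        if_neg (show ¬ U = 2*c+2 by omega),
        if_neg (show ¬ V ≤ c by omega),
        if_neg (show ¬ V ≤ c+(σ+5)-1 by omega),
        if_neg (show ¬ V ≤ 2*c by omega),
        if_neg (show ¬ V = 2*c+1 by omega),
        if_neg (show ¬ V = 2*c+2 by omega)] at h
      omega

end VC

namespace VC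

theorem core {c s : ℕ} (hs : 5 ≤ s) (hsc : s + 2 ≤ c) (hss : s * s + s = 4 * c + 2)
    (h1 : ¬ IsPerfectSquare (8 * c + 1)) (h2 : ¬ IsPerfectSquare (8 * c + 9)) :
    TransIrregular (varCaterpillar (2*c+1) (c+1) ((c+s-1)+1)) := by
  constructor
  · rw [Fintype.card_fin]; omega
  · intro u v huv
    have e1 : Tv c s u.val = Tv c s v.val := by
      rw [← key4 hs hsc hss u.isLt, ← key4 hs hsc hss v.isLt]
      simp only [Fin.eta]
      rw [huv]
    obtain ⟨σ, rfl⟩ : ∃ σ, s = σ + 5 := ⟨s - 5, by omega⟩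
    have hsc' : σ + 7 ≤ c := by omega
    have hu := u.isLt
    have hv := v.isLt
    rcases le_total u.val v.val with hle | hle
    · exact Fin.ext (collide_le hsc' hss h1 h2 (by omega) (by omega) hle e1)
    · exact (Fin.ext (collide_le hsc' hss h1 h2 (by omega) (by omega) hle e1.symm)).symm

end VC

/-- for any even `n ≥ 14` such that neither `4n - 15` nor `4n - 7` is a
perfect square while `8n - 23` is, the variant caterpillar
`C_{n-3}(n/2 - 1, 2; n/2 + (√(8n-23) - 1)/2 - 2, 1)` is transmission irregular. -/
theorem varCaterpillar_TI_of_sq (n : ℕ) (heven : Even n) (hn : 14 ≤ n)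
    (h1 : ¬ IsPerfectSquare (4 * n - 15)) (h2 : ¬ IsPerfectSquare (4 * n - 7))
    (h3 : IsPerfectSquare (8 * n - 23)) :
    TransIrregular
      (varCaterpillar (n - 3) (n / 2 - 1)
        (n / 2 + (Nat.sqrt (8 * n - 23) - 1) / 2 - 2)) := by
  obtain ⟨t, ht⟩ := h3
  obtain ⟨k, rfl⟩ := heven
  have hk : 7 ≤ k := by omega
  -- t is odd
  have hodd : Odd t := by
    have h' : Odd (t * t) := by
      rw [← ht]; exact ⟨4 * (k + k) - 12, by omega⟩
    exact (Nat.odd_mul.mp h').1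
  obtain ⟨w, hw⟩ := hodd
  -- t ≥ 11
  have ht11 : 11 ≤ t := by
    by_contra hc
    have h9 : t ≤ 9 := by omega
    have := Nat.mul_le_mul h9 h9
    omega
  have hw5 : 5 ≤ w := by omega
  -- arithmetic relation
  obtain ⟨W, hW⟩ : ∃ W, W = w * w := ⟨_, rfl⟩
  have hexp : t * t = 4 * W + 4 * w + 1 := by rw [hW, hw]; ring
  have hss : w * w + w = 4 * (k - 2) + 2 := by
    rw [← hW]; omega
  have hsc : w + 2 ≤ k - 2 := by
    have h5w : 5 * w ≤ w * w := Nat.mul_le_mul hw5 le_rfl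
    rw [← hW] at hss
    omega
  have hsqrt : Nat.sqrt (8 * (k + k) - 23) = t := by rw [ht, Nat.sqrt_eq]
  rw [show (k + k) - 3 = 2 * (k - 2) + 1 by omega,
    show (k + k) / 2 - 1 = (k - 2) + 1 by omega]
  rw [hsqrt]
  rw [show (k + k) / 2 + (t - 1) / 2 - 2 = ((k - 2) + w - 1) + 1 by omega]
  have h1' : ¬ IsPerfectSquare (8 * (k - 2) + 1) := by
    rwa [show 8 * (k - 2) + 1 = 4 * (k + k) - 15 by omega]
  have h2' : ¬ IsPerfectSquare (8 * (k - 2) + 9) := by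
    rwa [show 8 * (k - 2) + 9 = 4 * (k + k) - 7 by omega]
  exact VC.core hw5 hsc hss h1' h2'
end
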